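/- arXiv:1405.7333 — 11 statements merged into one kernel-verified Lean document; each statement's English description precedes it below -/
import Mathlib

section
/- Let a ∈ (-1,1) and let η be a Borel probability measure on [0,∞) such that ∫₀^∞ e^{ντ} dη(τ) < ∞ for some ν > 0, whose mean E = ∫₀^∞ τ dη(τ) satisfies E < arccos(-a)/√(1-a²). Then every complex root λ of the characteristic equation λ + a + ∫₀^∞ e^{-λτ} dη(τ) = 0 has negative real part (i.e., the distribution η is stable). -/
/-!
Suppose `z = x + i y` is a root with `x ≥ 0`. Damping `η` by `e^{-xτ}` gives a finite measure `μ`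
of mass `c ∈ (0, 1]` and mean `T ≤ E`, whose characteristic function satisfies
`φ_μ(|y|) = -(x + a) + i |y|`. The bounds `1 - x E ≤ c ≤ 1`, together with `-a E ≤ 1` (a consequence
of `E < arccos (-a) / √(1 - a²)`), give `a c ≤ x + a`.

If `y = 0` then `c = -(x + a)`, contradicting `a c ≤ x + a` because `a > -1`. Otherwise
`|x + a| < c`, and with `cos θ = -(x + a) / c` integrating against `μ` a combination of `τ`,
`sin (|y| τ)`, `cos (|y| τ)` and `1` that is nonnegative for `τ ≥ 0` yields `θ / sin θ ≤ T`. As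
`θ / sin θ` increases with `θ` and `a ≤ -cos θ`, we get `T ≥ arccos (-a) / √(1 - a²) > E ≥ T`.
-/

open MeasureTheory Real Set
open Complex (I)

lemma mul_cos_le_sin {w : ℝ} (h₀ : 0 ≤ w) (hπ : w ≤ π) : w * cos w ≤ sin w := by
  rcases lt_or_ge w (π / 2) with hw | hw
  · have hcos : 0 < cos w := cos_pos_of_mem_Ioo ⟨by linarith [pi_pos], hw⟩
    simpa [tan_eq_sin_div_cos, le_div_iff₀ hcos] using le_tan h₀ hw
  · have hcos : cos w ≤ 0 := cos_nonpos_of_pi_div_two_le_of_le hw (by linarith [pi_pos])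
    nlinarith [sin_nonneg_of_nonneg_of_le_pi h₀ hπ]

lemma sub_sin_le_half_mul_one_sub_cos {v : ℝ} (h₀ : 0 ≤ v) (hπ : v ≤ π) :
    v - sin v ≤ v / 2 * (1 - cos v) := by
  have hcos : 0 ≤ cos (v / 2) := cos_nonneg_of_mem_Icc ⟨by linarith [pi_pos], by linarith⟩
  have hsin : sin v = 2 * sin (v / 2) * cos (v / 2) := by rw [← sin_two_mul]; ring_nf
  have hcos' : cos v = 2 * cos (v / 2) ^ 2 - 1 := by rw [← cos_two_mul]; ring_nf
  have := mul_le_mul_of_nonneg_right (mul_cos_le_sin (w := v / 2) (by linarith) (by linarith)) hcos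
  rw [hsin, hcos']
  nlinarith

/-- As a function of `u`, the right-hand side is a combination of `u`, `sin u`, `cos u` and `1`
with a double zero at `u = θ`. -/
lemma sin_cos_certificate_nonneg {θ u : ℝ} (hθ₀ : 0 < θ) (hθπ : θ < π) (hu : 0 ≤ u) :
    0 ≤ u * sin θ ^ 2 - θ * sin θ * sin u + (sin θ - θ * cos θ) * (cos u - cos θ) := by
  set s := sin θ
  set c := cos θ
  have hsc : s ^ 2 + c ^ 2 = 1 := sin_sq_add_cos_sq θ
  have hs : s ≤ θ := (sin_lt hθ₀).le
  have hs₀ : 0 < s := sin_pos_of_pos_of_lt_pi hθ₀ hθπ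
  have hθsc : 0 ≤ θ - s * c := by nlinarith [cos_le_one θ]
  have hcos : cos (u - θ) ≤ 1 := cos_le_one _
  have key : u * s ^ 2 - θ * s * sin u + (s - θ * c) * (cos u - c)
      = s ^ 2 * ((u - θ) - sin (u - θ)) + (θ - s * c) * (1 - cos (u - θ)) := by
    rw [sin_sub, cos_sub]
    linear_combination (θ - s * cos u) * hsc
  rw [key]
  rcases le_or_gt θ u with hθu | huθ
  · nlinarith [sin_le (sub_nonneg.2 hθu)]
  · -- with `v = θ - u ∈ (0, θ]`: `s² (v - sin v) ≤ s² θ/2 (1 - cos v) ≤ (θ - s c)(1 - cos v)`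
    set v := θ - u
    have hv : u - θ = -v := by ring
    rw [hv, sin_neg, cos_neg]
    have hcv : cos v ≤ 1 := cos_le_one v
    have h₁ := sub_sin_le_half_mul_one_sub_cos (v := v) (by linarith) (by linarith)
    have h₂ : s ^ 2 * (θ / 2) ≤ θ - s * c := by
      nlinarith [mul_nonneg (sub_nonneg.2 hs) (by nlinarith : 0 ≤ 1 - s ^ 2 / 2),
        mul_nonneg hs₀.le (sq_nonneg (1 - c))]
    nlinarith [mul_le_mul_of_nonneg_left h₁ (sq_nonneg s),
      mul_nonneg (mul_nonneg (sq_nonneg s) (by linarith : 0 ≤ θ - v)) (sub_nonneg.2 hcv)]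

lemma div_sin_le_div_sin {θ₁ θ₂ : ℝ} (h₀ : 0 < θ₁) (h₁₂ : θ₁ ≤ θ₂) (hπ : θ₂ < π) :
    θ₁ / sin θ₁ ≤ θ₂ / sin θ₂ := by
  have hslope := strictConcaveOn_sin_Icc.concaveOn.antitoneOn_slope_gt
    (left_mem_Icc.2 pi_pos.le) ⟨⟨h₀.le, by linarith⟩, h₀⟩ ⟨⟨by linarith, hπ.le⟩, by linarith⟩ h₁₂
  simp only [slope_def_field, sin_zero, sub_zero] at hslope
  have hs₁ := sin_pos_of_pos_of_lt_pi h₀ (by linarith)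
  have hs₂ := sin_pos_of_pos_of_lt_pi (by linarith) hπ
  rw [div_le_div_iff₀ hs₁ hs₂]
  rw [div_le_div_iff₀ (by linarith) h₀] at hslope
  linarith

noncomputable def stabilityBound (a : ℝ) : ℝ := arccos (-a) / √(1 - a ^ 2)

lemma stabilityBound_eq_div_sin (a : ℝ) :
    stabilityBound a = arccos (-a) / sin (arccos (-a)) := by
  rw [stabilityBound, sin_arccos, neg_sq]

lemma stabilityBound_mono {a b : ℝ} (ha : -1 < a) (hab : a ≤ b) (hb : b < 1) :
    stabilityBound a ≤ stabilityBound b := by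
  simp only [stabilityBound_eq_div_sin]
  exact div_sin_le_div_sin (arccos_pos.2 (by linarith)) (arccos_le_arccos (neg_le_neg hab))
    (arccos_lt_pi.2 (by linarith))

lemma neg_mul_stabilityBound_le_one {a : ℝ} (ha : a ∈ Ioo (-1) 1) : -a * stabilityBound a ≤ 1 := by
  have hθ₀ : 0 < arccos (-a) := arccos_pos.2 (by linarith [ha.1])
  have hθπ : arccos (-a) < π := arccos_lt_pi.2 (by linarith [ha.2])
  have h := mul_cos_le_sin hθ₀.le hθπ.le
  rw [cos_arccos (by linarith [ha.2]) (by linarith [ha.1])] at h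
  rw [stabilityBound_eq_div_sin, ← mul_div_assoc, div_le_one (sin_pos_of_pos_of_lt_pi hθ₀ hθπ)]
  linarith

section CharFun

variable {μ : Measure ℝ}

lemma abs_lt_measureReal_univ_of_charFun_eq {t w s : ℝ} (hs : s ≠ 0)
    (h : charFun μ t = w + s * I) : |w| < μ.real univ := by
  have := (Complex.abs_re_lt_norm.2 (by simp [h, hs])).trans_le (norm_charFun_le (μ := μ) t)
  simpa [h] using this

lemma charFun_abs_of_charFun_neg {w y : ℝ} (h : charFun μ (-y) = w - y * I) :
    charFun μ |y| = w + |y| * I := by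
  rcases abs_cases y with ⟨hy, -⟩ | ⟨hy, -⟩
  · rw [charFun_neg] at h
    rw [hy, ← Complex.conj_conj (charFun μ y), h]
    simp
  · rw [hy, h]
    push_cast
    ring

variable [IsFiniteMeasure μ]

lemma integrable_exp_mul_I (t : ℝ) : Integrable (fun τ : ℝ => Complex.exp (t * τ * I)) μ :=
  .of_bound (by fun_prop) 1 (.of_forall fun τ => by
    rw [← Complex.ofReal_mul, Complex.norm_exp_ofReal_mul_I])

lemma integral_cos_mul_eq_re_charFun (t : ℝ) : ∫ τ, cos (t * τ) ∂μ = (charFun μ t).re := by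
  rw [charFun_apply_real, ← RCLike.re_to_complex, ← integral_re (integrable_exp_mul_I t)]
  simp [← Complex.ofReal_mul, Complex.exp_ofReal_mul_I_re]

lemma integral_sin_mul_eq_im_charFun (t : ℝ) : ∫ τ, sin (t * τ) ∂μ = (charFun μ t).im := by
  rw [charFun_apply_real, ← RCLike.im_to_complex, ← integral_im (integrable_exp_mul_I t)]
  simp [← Complex.ofReal_mul, Complex.exp_ofReal_mul_I_im]

lemma div_sin_le_integral_of_charFun_eq (hμ : ∀ᵐ τ ∂μ, 0 ≤ τ) (hint : Integrable (fun τ => τ) μ)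
    {t θ : ℝ} (ht : 0 < t) (hθ₀ : 0 < θ) (hθπ : θ < π)
    (h : charFun μ t = μ.real univ * cos θ + t * I) :
    θ / sin θ ≤ ∫ τ, τ ∂μ := by
  have hcos : ∫ τ, cos (t * τ) ∂μ = μ.real univ * cos θ := by
    simp [integral_cos_mul_eq_re_charFun, h, Complex.cos_ofReal_re]
  have hsin : ∫ τ, sin (t * τ) ∂μ = t := by
    simp [integral_sin_mul_eq_im_charFun, h]
  set s := sin θ
  have hs : 0 < s := sin_pos_of_pos_of_lt_pi hθ₀ hθπ
  set k := s - θ * cos θ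
  have hcert : 0 ≤ ∫ τ, (t * s ^ 2 * τ - θ * s * sin (t * τ) + k * cos (t * τ)
      - k * cos θ) ∂μ := by
    refine integral_nonneg_of_ae ?_
    filter_upwards [hμ] with τ hτ
    exact (sin_cos_certificate_nonneg hθ₀ hθπ (mul_nonneg ht.le hτ)).trans_eq (by ring)
  have hcosi : Integrable (fun τ => cos (t * τ)) μ :=
    .of_bound (by fun_prop) 1 (.of_forall fun τ => by simpa using abs_cos_le_one (t * τ))
  have hsini : Integrable (fun τ => sin (t * τ)) μ :=
    .of_bound (by fun_prop) 1 (.of_forall fun τ => by simpa using abs_sin_le_one (t * τ))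
  rw [integral_sub ?_ (integrable_const _), integral_add ?_ (hcosi.const_mul _),
    integral_sub (hint.const_mul _) (hsini.const_mul _), integral_const_mul, integral_const_mul,
    integral_const_mul, hcos, hsin, integral_const, smul_eq_mul] at hcert
  · rw [div_le_iff₀ hs]
    nlinarith [mul_pos ht hs]
  · exact (hint.const_mul _).sub (hsini.const_mul _)
  · exact ((hint.const_mul _).sub (hsini.const_mul _)).add (hcosi.const_mul _)

lemma stabilityBound_le_integral_of_charFun_eq (hμ : ∀ᵐ τ ∂μ, 0 ≤ τ)
    (hint : Integrable (fun τ => τ) μ) {t b : ℝ} (ht : 0 < t) (hb : |b| < 1) (h : charFun μ t = -(b * μ.real univ) + t * I) :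
    stabilityBound b ≤ ∫ τ, τ ∂μ := by
  obtain ⟨hb₁, hb₂⟩ := abs_lt.1 hb
  rw [stabilityBound_eq_div_sin]
  refine div_sin_le_integral_of_charFun_eq hμ hint ht (arccos_pos.2 (by linarith))
    (arccos_lt_pi.2 (by linarith)) ?_
  rw [h, cos_arccos (by linarith) (by linarith)]
  push_cast
  ring

end CharFun

noncomputable def expDamped (η : Measure ℝ) (x : ℝ) : Measure ℝ :=
  η.withDensity fun τ => ENNReal.ofReal (Real.exp (-(x * τ)))

section ExpDamped

variable {η : Measure ℝ} {x : ℝ}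

lemma expDamped_absolutelyContinuous : expDamped η x ≪ η :=
  withDensity_absolutelyContinuous _ _

lemma integral_expDamped {E : Type*} [NormedAddCommGroup E] [NormedSpace ℝ E] (g : ℝ → E) :
    ∫ τ, g τ ∂expDamped η x = ∫ τ, Real.exp (-(x * τ)) • g τ ∂η := by
  rw [expDamped, integral_withDensity_eq_integral_toReal_smul (by fun_prop)
    (.of_forall fun _ => ENNReal.ofReal_lt_top)]
  simp_rw [ENNReal.toReal_ofReal (Real.exp_pos _).le]

lemma integrable_expDamped_iff {f : ℝ → ℝ} :
    Integrable f (expDamped η x) ↔ Integrable (fun τ => Real.exp (-(x * τ)) * f τ) η := by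
  rw [expDamped, integrable_withDensity_iff_integrable_smul' (by fun_prop)
    (.of_forall fun _ => ENNReal.ofReal_lt_top)]
  simp_rw [ENNReal.toReal_ofReal (Real.exp_pos _).le, smul_eq_mul]

lemma measureReal_univ_expDamped : (expDamped η x).real univ = ∫ τ, Real.exp (-(x * τ)) ∂η := by
  simpa using integral_expDamped (η := η) (x := x) fun _ => (1 : ℝ)

lemma charFun_expDamped (z : ℂ) :
    charFun (expDamped η z.re) (-z.im) = ∫ τ, Complex.exp (-z * τ) ∂η := by
  rw [charFun_apply_real, integral_expDamped]
  congr 1 with τ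
  rw [Complex.real_smul, Complex.ofReal_exp, ← Complex.exp_add]
  congr 1
  apply Complex.ext <;> simp

lemma charFun_expDamped_abs_im {a : ℝ} {z : ℂ} (hz : z + a + ∫ τ, Complex.exp (-z * τ) ∂η = 0) :
    charFun (expDamped η z.re) |z.im| = -(z.re + a) + |z.im| * I := by
  have h := charFun_abs_of_charFun_neg (w := -(z.re + a)) <| by
    rw [charFun_expDamped, show ∫ τ, Complex.exp (-z * τ) ∂η = -(z + a) by
      linear_combination hz]
    apply Complex.ext <;> simp
  simpa using h

lemma ae_exp_neg_mul_le_one (hη : ∀ᵐ τ ∂η, 0 ≤ τ) (hx : 0 ≤ x) :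
    ∀ᵐ τ ∂η, Real.exp (-(x * τ)) ≤ 1 := by
  filter_upwards [hη] with τ hτ
  simpa using mul_nonneg hx hτ

lemma integrable_id_expDamped (hη : ∀ᵐ τ ∂η, 0 ≤ τ) (hx : 0 ≤ x)
    (hint : Integrable (fun τ => τ) η) : Integrable (fun τ => τ) (expDamped η x) := by
  rw [integrable_expDamped_iff]
  refine hint.mono' (by fun_prop) ?_
  filter_upwards [hη, ae_exp_neg_mul_le_one hη hx] with τ hτ hexp
  rw [norm_mul, Real.norm_of_nonneg (Real.exp_pos _).le, Real.norm_of_nonneg hτ]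
  exact mul_le_of_le_one_left hτ hexp

lemma integral_id_expDamped_le (hη : ∀ᵐ τ ∂η, 0 ≤ τ) (hx : 0 ≤ x)
    (hint : Integrable (fun τ => τ) η) : ∫ τ, τ ∂expDamped η x ≤ ∫ τ, τ ∂η := by
  rw [integral_expDamped]
  refine integral_mono_ae (integrable_expDamped_iff.1 (integrable_id_expDamped hη hx hint))
    hint ?_
  filter_upwards [hη, ae_exp_neg_mul_le_one hη hx] with τ hτ hexp
  exact mul_le_of_le_one_left hτ hexp

lemma integrable_exp_neg_mul [IsFiniteMeasure η] (hη : ∀ᵐ τ ∂η, 0 ≤ τ) (hx : 0 ≤ x) :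
    Integrable (fun τ => Real.exp (-(x * τ))) η :=
  .of_bound (by fun_prop) 1 <| (ae_exp_neg_mul_le_one hη hx).mono fun τ h => by
    rwa [Real.norm_of_nonneg (Real.exp_pos _).le]

lemma isFiniteMeasure_expDamped [IsFiniteMeasure η] (hη : ∀ᵐ τ ∂η, 0 ≤ τ) (hx : 0 ≤ x) :
    IsFiniteMeasure (expDamped η x) :=
  isFiniteMeasure_withDensity_ofReal (integrable_exp_neg_mul hη hx).2

variable [IsProbabilityMeasure η]

lemma measureReal_univ_expDamped_pos (hη : ∀ᵐ τ ∂η, 0 ≤ τ) (hx : 0 ≤ x) :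
    0 < (expDamped η x).real univ := by
  rw [measureReal_univ_expDamped]
  exact integral_exp_pos (integrable_exp_neg_mul hη hx)

lemma measureReal_univ_expDamped_le_one (hη : ∀ᵐ τ ∂η, 0 ≤ τ) (hx : 0 ≤ x) :
    (expDamped η x).real univ ≤ 1 := by
  rw [measureReal_univ_expDamped]
  simpa using integral_mono_ae (integrable_exp_neg_mul hη hx) (integrable_const 1)
    (ae_exp_neg_mul_le_one hη hx)

lemma one_sub_mul_integral_le_measureReal_univ_expDamped (hη : ∀ᵐ τ ∂η, 0 ≤ τ) (hx : 0 ≤ x)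
    (hint : Integrable (fun τ => τ) η) : 1 - x * ∫ τ, τ ∂η ≤ (expDamped η x).real univ := by
  have h := integral_mono (f := fun τ => 1 - x * τ) ((integrable_const 1).sub (hint.const_mul x))
    (integrable_exp_neg_mul hη hx) fun τ => by linarith [add_one_le_exp (-(x * τ))]
  rwa [integral_sub (integrable_const 1) (hint.const_mul x), integral_const_mul, integral_const,
    probReal_univ, one_smul, ← measureReal_univ_expDamped] at h

lemma mul_measureReal_univ_expDamped_le_add {a : ℝ} (ha : a ∈ Ioo (-1) 1)
    (hη : ∀ᵐ τ ∂η, 0 ≤ τ) (hx : 0 ≤ x) (hint : Integrable (fun τ => τ) η)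
    (hE : ∫ τ, τ ∂η < stabilityBound a) : a * (expDamped η x).real univ ≤ x + a := by
  rcases le_or_gt 0 a with ha₀ | ha₀
  · nlinarith [measureReal_univ_expDamped_le_one hη hx]
  · have h₁ := one_sub_mul_integral_le_measureReal_univ_expDamped hη hx hint
    have h₂ : -a * ∫ τ, τ ∂η ≤ 1 :=
      (mul_le_mul_of_nonneg_left hE.le (by linarith)).trans (neg_mul_stabilityBound_le_one ha)
    nlinarith

end ExpDamped

lemma integrable_id_of_integrable_exp_mul {η : Measure ℝ} (hη : ∀ᵐ τ ∂η, 0 ≤ τ) {ν : ℝ} (hν : 0 < ν)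
    (h : Integrable (fun τ => Real.exp (ν * τ)) η) : Integrable (fun τ => τ) η := by
  refine (h.const_mul ν⁻¹).mono' (by fun_prop) ?_
  filter_upwards [hη] with τ hτ
  rw [Real.norm_of_nonneg hτ, le_inv_mul_iff₀ hν]
  linarith [add_one_le_exp (ν * τ)]

/-- Paper Theorem 5.2: stability of a general distribution of delays. -/
theorem stmt1 (a : ℝ) (ha : a ∈ Set.Ioo (-1 : ℝ) 1)
    (η : Measure ℝ) [IsProbabilityMeasure η]
    (hsupp : η (Set.Iio 0) = 0)
    (hν : ∃ ν > 0, Integrable (fun τ => Real.exp (ν * τ)) η)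
    (E : ℝ) (hE : E = ∫ τ, τ ∂η)
    (hEbound : E < Real.arccos (-a) / Real.sqrt (1 - a ^ 2)) :
    ∀ z : ℂ, z + (a : ℂ) + (∫ τ, Complex.exp (-z * τ) ∂η) = 0 → z.re < 0 := by
  have hη : ∀ᵐ τ ∂η, 0 ≤ τ := ae_iff.2 (by simp only [not_le]; exact hsupp)
  obtain ⟨ν, hν, hexp⟩ := hν
  have hint := integrable_id_of_integrable_exp_mul hη hν hexp
  change E < stabilityBound a at hEbound
  subst hE
  intro z hz
  by_contra! hx
  have := isFiniteMeasure_expDamped hη hx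
  set c := (expDamped η z.re).real univ
  have hc : 0 < c := measureReal_univ_expDamped_pos hη hx
  have hchar := charFun_expDamped_abs_im hz
  have hac := mul_measureReal_univ_expDamped_le_add ha hη hx hint hEbound
  rcases (abs_nonneg z.im).eq_or_lt with h₀ | hpos
  · rw [← h₀, charFun_zero] at hchar
    have hre : c = -(z.re + a) := by simpa using congrArg Complex.re hchar
    nlinarith [mul_pos hc (show 0 < 1 + a by linarith [ha.1])]
  · have hlt : |-(z.re + a)| < c :=
      abs_lt_measureReal_univ_of_charFun_eq hpos.ne' (by rw [hchar]; push_cast; rfl)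
    have hb : |(z.re + a) / c| < 1 := by rwa [abs_div, abs_of_pos hc, div_lt_one hc, ← abs_neg]
    have hT := stabilityBound_le_integral_of_charFun_eq
      (expDamped_absolutelyContinuous.ae_le hη) (integrable_id_expDamped hη hx hint) hpos hb
      (by rw [hchar, ← Complex.ofReal_mul, div_mul_cancel₀ _ hc.ne']; push_cast; ring)
    have hmono := stabilityBound_mono ha.1 ((le_div_iff₀ hc).2 hac) (abs_lt.1 hb).2
    linarith [integral_id_expDamped_le hη hx hint]
end

section
/- Let a ∈ (-1,1) and E > 0 satisfy E < arccos(-a)/√(1-a²). Let η = Σ_{i=1}^n p_i δ_{τ_i} be a finitely supported probability measure on [0,∞) (τ_i ≥ 0, p_i > 0, Σ p_i = 1) with mean Σ p_i τ_i = E. Then every complex root λ of the characteristic equation λ + a + Σ_{i=1}^n p_i e^{-λ τ_i} = 0 has negative real part. -/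
/-!
Let `φ = arccos (-a) ∈ (0, π)`, `s = sin φ = √(1 - a²)` and `β = sin φ - φ cos φ > 0`. For `ζ` in the
closed first quadrant, the quantity `φ s² Im ζ + β s Re ζ + φ² s Im e^{-ζ} + φ β Re e^{-ζ}` is at least
`φ β cos φ`; equality holds at `ζ = iφ`. Averaging over `ζ = λ τᵢ` with the weights `pᵢ`, and
substituting `∑ pᵢ e^{-λτᵢ} = -(λ + a)` from the characteristic equation, turns this into
`(φ s Im λ + β Re λ) (s E - φ) ≥ 0`. If `λ` is a root with `Re λ ≥ 0`, we may take `Im λ ≥ 0`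
(roots come in conjugate pairs). Since `s E < φ`, this forces `λ = 0`, and `λ = 0` is not a root
because `a > -1`.
-/

open Real

theorem mul_cos_lt_sin {φ : ℝ} (h0 : 0 < φ) (hπ : φ ≤ π) : φ * cos φ < sin φ := by
  have hmono : StrictMonoOn (fun x => sin x - x * cos x) (Set.Icc 0 π) := by
    refine strictMonoOn_of_deriv_pos (convex_Icc 0 π) (by fun_prop) fun x hx => ?_
    rw [interior_Icc] at hx
    have hd : HasDerivAt (fun x => sin x - x * cos x) (x * sin x) x :=
      ((hasDerivAt_sin x).sub ((hasDerivAt_id' x).mul (hasDerivAt_cos x))).congr_deriv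
        (by ring)
    rw [hd.deriv]
    exact mul_pos hx.1 (sin_pos_of_pos_of_lt_pi hx.1 hx.2)
  simpa using hmono ⟨le_rfl, pi_pos.le⟩ ⟨h0.le, hπ⟩ h0

theorem sin_mul_one_sub_cos_le {v φ : ℝ} (hv : 0 ≤ v) (hvφ : v ≤ φ) (hφ : φ ≤ π) :
    sin φ * (1 - cos v) ≤ sin v * (1 - cos φ) := by
  have hsv : 0 ≤ sin v := sin_nonneg_of_nonneg_of_le_pi hv (hvφ.trans hφ)
  have hsd : 0 ≤ sin (φ - v) := sin_nonneg_of_nonneg_of_le_pi (by linarith) (by linarith)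
  have h := sin_add v (φ - v)
  rw [add_sub_cancel] at h
  nlinarith [cos_le_one (φ - v), cos_le_one v, sin_sub φ v]

theorem sin_sq_mul_sub_sin_le {u φ : ℝ} (hu : 0 ≤ u) (huφ : u ≤ φ) (hφ : φ ≤ π) :
    sin φ ^ 2 * (u - sin u) ≤ (1 - cos u) * (φ - sin φ * cos φ) := by
  set f : ℝ → ℝ := fun v => (1 - cos v) * (φ - sin φ * cos φ) - sin φ ^ 2 * (v - sin v)
  have hmono : MonotoneOn f (Set.Icc 0 φ) := by
    refine monotoneOn_of_deriv_nonneg (convex_Icc 0 φ) (by fun_prop) (by fun_prop) fun v hv => ?_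
    rw [interior_Icc] at hv
    have hd : HasDerivAt f (sin v * (φ - sin φ * cos φ) - sin φ ^ 2 * (1 - cos v)) v :=
      ((((hasDerivAt_cos v).const_sub 1).mul_const _).sub
        (((hasDerivAt_id' v).sub (hasDerivAt_sin v)).const_mul (sin φ ^ 2))).congr_deriv
        (by ring)
    rw [hd.deriv]
    have hsφ : 0 ≤ sin φ := sin_nonneg_of_nonneg_of_le_pi (hu.trans huφ) hφ
    have hsv : 0 ≤ sin v := sin_nonneg_of_nonneg_of_le_pi hv.1.le (by linarith [hv.2])
    nlinarith [mul_le_mul_of_nonneg_left (sin_mul_one_sub_cos_le hv.1.le hv.2.le hφ) hsφ,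
      sin_le (hu.trans huφ), cos_le_one v]
  have := hmono ⟨le_rfl, hu.trans huφ⟩ ⟨hu, huφ⟩ hu
  simp only [f, cos_zero, sin_zero] at this
  linarith

/-- `θ ↦ φ sin φ sin θ - (sin φ - φ cos φ) cos θ` lies below its tangent line at `θ = φ`. -/
theorem mul_sin_sub_mul_cos_le {φ θ : ℝ} (h0 : 0 ≤ φ) (hπ : φ ≤ π) (hθ : 0 ≤ θ) :
    φ * sin φ * sin θ - (sin φ - φ * cos φ) * cos θ ≤
      sin φ ^ 2 * θ - (sin φ - φ * cos φ) * cos φ := by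
  have hsc : sin φ * cos φ ≤ φ := by
    nlinarith [sin_le h0, sin_nonneg_of_nonneg_of_le_pi h0 hπ, cos_le_one φ, neg_one_le_cos φ]
  have key : sin φ ^ 2 * θ - (sin φ - φ * cos φ) * cos φ -
      (φ * sin φ * sin θ - (sin φ - φ * cos φ) * cos θ) =
      sin φ ^ 2 * ((θ - φ) - sin (θ - φ)) + (1 - cos (θ - φ)) * (φ - sin φ * cos φ) := by
    rw [sin_sub, cos_sub]
    linear_combination (φ - sin φ * cos θ) * sin_sq_add_cos_sq φ
  rcases le_total φ θ with h | h
  · nlinarith [sin_le (sub_nonneg.2 h), cos_le_one (θ - φ)]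
  · have := sin_sq_mul_sub_sin_le (sub_nonneg.2 h) (sub_le_self φ hθ) hπ
    rw [← neg_sub φ θ, sin_neg, cos_neg] at key
    linarith

theorem le_linear_comb_exp_neg {φ : ℝ} (h0 : 0 < φ) (hπ : φ ≤ π) {ζ : ℂ}
    (hre : 0 ≤ ζ.re) (him : 0 ≤ ζ.im) :
    φ * (sin φ - φ * cos φ) * cos φ ≤
      φ * sin φ ^ 2 * ζ.im + (sin φ - φ * cos φ) * sin φ * ζ.re
        + φ ^ 2 * sin φ * (Complex.exp (-ζ)).im
        + φ * (sin φ - φ * cos φ) * (Complex.exp (-ζ)).re := by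
  rw [Complex.exp_re, Complex.exp_im, Complex.neg_re, Complex.neg_im, cos_neg, sin_neg]
  set e := Real.exp (-ζ.re)
  have he : 0 ≤ e := (Real.exp_pos _).le
  have he1 : 1 - e ≤ ζ.re := by linarith [add_one_le_exp (-ζ.re)]
  have he2 : e ≤ 1 := exp_le_one_iff.2 (by linarith)
  have hβ : 0 ≤ sin φ - φ * cos φ := (sub_pos.2 (mul_cos_lt_sin h0 hπ)).le
  have hs : 0 ≤ sin φ := sin_nonneg_of_nonneg_of_le_pi h0.le hπ
  have hG := mul_sin_sub_mul_cos_le h0.le hπ him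
  -- With `e = exp (-Re ζ)`, the difference of the two sides is exactly `t1 + t2 + t3`.
  have t1 : 0 ≤ (1 - e) * (φ * sin φ ^ 2 * ζ.im + (sin φ - φ * cos φ) ^ 2) :=
    mul_nonneg (sub_nonneg.2 he2) (add_nonneg (mul_nonneg (by positivity) him) (sq_nonneg _))
  have t2 := mul_le_mul_of_nonneg_left hG (mul_nonneg he h0.le)
  have t3 := mul_le_mul_of_nonneg_left he1 (mul_nonneg hβ hs)
  linear_combination t1 + t2 + t3

theorem le_linear_comb_sum_exp_neg {ι : Type*} [Fintype ι] {φ : ℝ} (h0 : 0 < φ) (hπ : φ ≤ π)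
    (p τ : ι → ℝ) (hp : ∀ i, 0 ≤ p i) (hτ : ∀ i, 0 ≤ τ i) {z : ℂ}
    (hre : 0 ≤ z.re) (him : 0 ≤ z.im) :
    φ * (sin φ - φ * cos φ) * cos φ * ∑ i, p i ≤
      φ * sin φ ^ 2 * z.im * ∑ i, p i * τ i + (sin φ - φ * cos φ) * sin φ * z.re * ∑ i, p i * τ i
        + φ ^ 2 * sin φ * (∑ i, (p i : ℂ) * Complex.exp (-z * τ i)).im
        + φ * (sin φ - φ * cos φ) * (∑ i, (p i : ℂ) * Complex.exp (-z * τ i)).re := by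
  have h i := mul_le_mul_of_nonneg_left (le_linear_comb_exp_neg h0 hπ (ζ := z * τ i)
    (by simpa using mul_nonneg hre (hτ i)) (by simpa using mul_nonneg him (hτ i))) (hp i)
  simp only [Complex.re_sum, Complex.im_sum, Complex.re_ofReal_mul, Complex.im_ofReal_mul,
    Finset.mul_sum, neg_mul]
  rw [← Finset.sum_add_distrib, ← Finset.sum_add_distrib, ← Finset.sum_add_distrib]
  refine Finset.sum_le_sum fun i _ => ?_
  simp only [Complex.re_mul_ofReal, Complex.im_mul_ofReal] at h
  linear_combination h i

theorem stmt2_general (a E : ℝ) (ha : a ∈ Set.Ioo (-1 : ℝ) 1)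
    (hEbound : E < Real.arccos (-a) / Real.sqrt (1 - a ^ 2))
    (n : ℕ) (p τ : Fin n → ℝ)
    (hp : ∀ i, 0 < p i) (hτ : ∀ i, 0 ≤ τ i)
    (hsum : ∑ i, p i = 1) (hmean : ∑ i, p i * τ i = E) :
    ∀ z : ℂ, z + (a : ℂ) + (∑ i, (p i : ℂ) * Complex.exp (-z * (τ i : ℂ))) = 0 →
      z.re < 0 := by
  intro z hz
  by_contra! hre
  wlog him : 0 ≤ z.im generalizing z
  · refine this (starRingEnd ℂ z) ?_ hre (by simpa using (not_le.1 him).le)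
    simpa [map_sum, ← Complex.exp_conj] using congrArg (starRingEnd ℂ) hz
  set φ := arccos (-a)
  obtain ⟨ha1, ha2⟩ := ha
  have h0 : 0 < φ := arccos_pos.2 (by linarith)
  have hπ : φ < π := arccos_lt_pi.2 (by linarith)
  have hcos : cos φ = -a := cos_arccos (by linarith) (by linarith)
  have hsin : sin φ = √(1 - a ^ 2) := by rw [sin_arccos, neg_sq]
  have hs : 0 < sin φ := sin_pos_of_pos_of_lt_pi h0 hπ
  have hβ : 0 < sin φ - φ * cos φ := sub_pos.2 (mul_cos_lt_sin h0 hπ.le)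
  have hEφ : sin φ * E < φ := by
    rw [hsin, mul_comm]; exact (lt_div_iff₀ (hsin ▸ hs)).1 hEbound
  have hexp : ∑ i, (p i : ℂ) * Complex.exp (-z * τ i) = -(z + a) := by linear_combination hz
  have hbound := le_linear_comb_sum_exp_neg h0 hπ.le p τ (fun i => (hp i).le) hτ hre him
  rw [hsum, hmean, hexp] at hbound
  simp only [Complex.neg_re, Complex.neg_im, Complex.add_re, Complex.add_im, Complex.ofReal_re,
    Complex.ofReal_im, add_zero, hcos] at hbound
  have hprod : 0 ≤ (φ * sin φ * z.im + (sin φ - φ * cos φ) * z.re) * (sin φ * E - φ) := by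
    rw [hcos] at hβ ⊢; linear_combination hbound
  have hnonpos := nonpos_of_mul_nonneg_left hprod (by linarith)
  have hy : z.im = 0 := by nlinarith [mul_pos h0 hs, mul_nonneg hβ.le hre]
  have hx : z.re = 0 := by nlinarith [mul_nonneg (mul_pos h0 hs).le him]
  obtain rfl : z = 0 := Complex.ext hx hy
  have : ((a + 1 : ℝ) : ℂ) = 0 := by simpa [← Complex.ofReal_sum, hsum] using hz
  norm_cast at this
  linarith

/-- Paper Theorem 4.5: stability of a distribution of discrete delays. -/
theorem stmt2 (a E : ℝ) (ha : a ∈ Set.Ioo (-1 : ℝ) 1) (hE : 0 < E)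
    (hEbound : E < Real.arccos (-a) / Real.sqrt (1 - a ^ 2))
    (n : ℕ) (hn : 1 ≤ n) (p τ : Fin n → ℝ)
    (hp : ∀ i, 0 < p i) (hτ : ∀ i, 0 ≤ τ i)
    (hsum : ∑ i, p i = 1) (hmean : ∑ i, p i * τ i = E) :
    ∀ z : ℂ, z + (a : ℂ) + (∑ i, (p i : ℂ) * Complex.exp (-z * (τ i : ℂ))) = 0 →
      z.re < 0 :=
  stmt2_general a E ha hEbound n p τ hp hτ hsum hmean
end

section
/- Let a, b ∈ ℝ and E ≥ 0, and consider the characteristic equation λ + a + b e^{-λE} = 0 associated with the single discrete delay E (η = δ_E). Every complex root λ of this equation has negative real part if and only if either (a > -b and a ≥ |b|), or (b > |a| and E < arccos(-a/b)/√(b²-a²)). -/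
/-!
Write a root as `z = x + iy` and put `ρ = b e^{-xE}`; the equation says `x + a = -ρ cos (yE)` and
`y = ρ sin (yE)`.

If `a ≥ |b|` and `x ≥ 0`, then `|z + a| = |b| e^{-xE} ≤ a ≤ Re (z + a)`, which forces `z = 0`,
impossible as `a + b ≠ 0`.

If `|a| < b`, write `a = -b cos φ` and `√(b² - a²) = b sin φ` with `φ = arccos (-a/b)`, so the
delay condition reads `E b sin φ < φ`. A root with `x, y ≥ 0` then has `yE < φ` (by the bound
`y ≤ b sin φ` when `cos φ ≤ 0`, by concavity of `sin` when `cos φ > 0`), so `ρ cos (yE) > ρ cos φ`;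
together with `E b cos φ < 1` this contradicts the real part of the equation.

Conversely, if `a + b ≤ 0` the real characteristic function has a nonnegative zero. Otherwise
`|a| < b` and `E b sin φ ≥ φ`: solving the real part for `cos (yE)` along `x ≥ 0`, the imaginary
part changes sign between `x = 0` and large `x`, and the intermediate value theorem gives a root
with `x ≥ 0`.
-/

open Real

noncomputable def delayChar (a b E : ℝ) (z : ℂ) : ℂ := z + a + b * Complex.exp (-z * E)

lemma delayChar_eq_zero_iff {a b E : ℝ} {z : ℂ} :
    delayChar a b E z = 0 ↔
      z.re + a + b * exp (-(z.re * E)) * cos (z.im * E) = 0 ∧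
        z.im = b * exp (-(z.re * E)) * sin (z.im * E) := by
  simp only [delayChar, Complex.ext_iff, Complex.add_re, Complex.add_im, Complex.mul_re,
    Complex.mul_im, Complex.ofReal_re, Complex.ofReal_im, Complex.exp_re, Complex.exp_im,
    Complex.neg_re, Complex.neg_im, Complex.zero_re, Complex.zero_im, mul_zero, zero_mul,
    sub_zero, add_zero, zero_add, neg_mul, cos_neg, sin_neg]
  constructor <;> rintro ⟨h1, h2⟩ <;> constructor <;> linarith

lemma delayChar_conj {a b E : ℝ} (z : ℂ) :
    delayChar a b E ((starRingEnd ℂ) z) = (starRingEnd ℂ) (delayChar a b E z) := by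
  simp [delayChar, ← Complex.exp_conj]

lemma mul_cos_arccos_neg_div {a b : ℝ} (hab : |a| < b) : b * cos (arccos (-a / b)) = -a := by
  have hb : 0 < b := (abs_nonneg a).trans_lt hab
  obtain ⟨h1, h2⟩ := abs_lt.1 hab
  rw [cos_arccos (by rw [le_div_iff₀ hb]; linarith) (by rw [div_le_one hb]; linarith)]
  field_simp

lemma sqrt_sq_sub_sq_eq_mul_sin_arccos {a b : ℝ} (hab : |a| < b) :
    √(b ^ 2 - a ^ 2) = b * sin (arccos (-a / b)) := by
  have hb : 0 < b := (abs_nonneg a).trans_lt hab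
  have hsq : b ^ 2 - a ^ 2 = b ^ 2 * (1 - (-a / b) ^ 2) := by field_simp
  rw [sin_arccos, hsq, sqrt_mul (sq_nonneg b), sqrt_sq hb.le]

lemma arccos_neg_div_pos {a b : ℝ} (hab : |a| < b) : 0 < arccos (-a / b) :=
  arccos_pos.2 ((div_lt_one ((abs_nonneg a).trans_lt hab)).2 (by linarith [neg_abs_le a]))

lemma lt_arccos_div_sqrt_iff {a b E : ℝ} (hab : |a| < b) :
    E < arccos (-a / b) / √(b ^ 2 - a ^ 2) ↔
      E * (b * sin (arccos (-a / b))) < arccos (-a / b) := by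
  obtain ⟨h1, h2⟩ := abs_lt.1 hab
  rw [lt_div_iff₀ (sqrt_pos.2 (by nlinarith)), sqrt_sq_sub_sq_eq_mul_sin_arccos hab]

lemma sin_div_le_sin_div {φ θ : ℝ} (hφ : 0 < φ) (hφθ : φ ≤ θ) (hθ : θ ≤ π) :
    sin θ / θ ≤ sin φ / φ := by
  have hθ0 := hφ.trans_le hφθ
  have h := strictConcaveOn_sin_Icc.concaveOn.antitoneOn_slope_gt (x := 0) ⟨le_rfl, pi_pos.le⟩
    ⟨⟨hφ.le, hφθ.trans hθ⟩, hφ⟩ ⟨⟨hθ0.le, hθ⟩, hθ0⟩ hφθ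
  simpa [slope_def_field] using h

lemma lt_pi_div_two_of_cos_pos {φ : ℝ} (hφπ : φ ≤ π) (hcos : 0 < cos φ) : φ < π / 2 := by
  by_contra! h
  exact hcos.not_ge (cos_nonpos_of_pi_div_two_le_of_le h (by linarith))

lemma mul_mul_cos_lt_one {b E φ : ℝ} (hφ : 0 < φ) (hφπ : φ ≤ π) (hE : 0 ≤ E) (hb : 0 ≤ b)
    (hEφ : E * (b * sin φ) < φ) : E * (b * cos φ) < 1 := by
  rcases le_or_gt (cos φ) 0 with hcos | hcos
  · nlinarith [mul_nonneg hE hb]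
  have hφ2 : φ < π / 2 := lt_pi_div_two_of_cos_pos hφπ hcos
  have hsinφ : 0 < sin φ := sin_pos_of_pos_of_lt_pi hφ (by linarith)
  have htan : φ * cos φ < sin φ := by
    have := lt_tan hφ hφ2
    rwa [tan_eq_sin_div_cos, lt_div_iff₀ hcos] at this
  nlinarith [mul_lt_mul_of_pos_right hEφ hcos]

lemma mul_one_sub_exp_le {c E x : ℝ} (hcE : E * c ≤ 1) (hE : 0 ≤ E) (hx : 0 ≤ x) :
    c * (1 - exp (-(x * E))) ≤ x := by
  have hexp : 1 - exp (-(x * E)) ≤ x * E := by linarith [add_one_le_exp (-(x * E))]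
  rcases le_or_gt c 0 with hc | hc
  · nlinarith [exp_le_one_iff.2 (neg_nonpos.2 (mul_nonneg hx hE))]
  · nlinarith [mul_le_mul_of_nonneg_left hexp hc.le]

lemma re_neg_of_abs_le {a b E : ℝ} (hE : 0 ≤ E) (hab : -b < a) (hba : |b| ≤ a) {z : ℂ}
    (hz : delayChar a b E z = 0) : z.re < 0 := by
  by_contra! hre
  have hnorm : ‖z + a‖ ≤ |b| := by
    have : z + a = -(b * Complex.exp (-z * E)) := by
      unfold delayChar at hz; linear_combination hz
    rw [this, norm_neg, norm_mul, Complex.norm_exp, Complex.norm_real, Real.norm_eq_abs]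
    refine mul_le_of_le_one_right (abs_nonneg b) (exp_le_one_iff.2 ?_)
    simpa using mul_nonneg hre hE
  have hre_add : (z + a).re = z.re + a := by simp
  have hre0 : z.re = 0 := by linarith [Complex.re_le_norm (z + a)]
  have him0 : z.im = 0 := by
    have h := Complex.abs_re_eq_norm.1 <| le_antisymm (Complex.abs_re_le_norm _) <| by
      rw [hre_add, hre0, zero_add]; exact hnorm.trans (hba.trans (le_abs_self a))
    simpa using h
  have hz0 : z = 0 := Complex.ext hre0 him0
  have : ((a + b : ℝ) : ℂ) = 0 := by simpa [delayChar, hz0] using hz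
  norm_cast at this
  linarith

lemma mul_lt_of_cos_nonpos {a b E φ x y ρ : ℝ} (hφ : 0 ≤ φ) (hφπ : φ ≤ π) (hcos : cos φ ≤ 0)
    (ha : b * cos φ = -a) (hE : 0 ≤ E) (hEφ : E * (b * sin φ) < φ) (hx : 0 ≤ x) (hy : 0 ≤ y)
    (hρ : 0 ≤ ρ) (hρb : ρ ≤ b) (hre : x + a + ρ * cos (y * E) = 0)
    (him : y = ρ * sin (y * E)) : y * E < φ := by
  have hb : 0 ≤ b := hρ.trans hρb
  have hbsin : 0 ≤ b * sin φ := mul_nonneg hb (sin_nonneg_of_nonneg_of_le_pi hφ hφπ)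
  have hpyth : y ^ 2 + (x + a) ^ 2 = ρ ^ 2 := by
    linear_combination (y + ρ * sin (y * E)) * him + (x + a - ρ * cos (y * E)) * hre +
      ρ ^ 2 * sin_sq_add_cos_sq (y * E)
  have hxa : (b * cos φ) ^ 2 ≤ (x + a) ^ 2 := by
    have : -(b * cos φ) ≤ x + a := by linarith
    nlinarith [mul_nonpos_of_nonneg_of_nonpos hb hcos]
  have hsq : y ^ 2 ≤ (b * sin φ) ^ 2 := by
    nlinarith [mul_le_mul hρb hρb hρ hb, sin_sq_add_cos_sq φ]
  have hyb : y ≤ b * sin φ := (pow_le_pow_iff_left₀ hy hbsin two_ne_zero).1 hsq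
  calc y * E ≤ b * sin φ * E := mul_le_mul_of_nonneg_right hyb hE
    _ < φ := by linarith

lemma mul_lt_of_cos_pos {b E φ y ρ : ℝ} (hφ : 0 < φ) (hφπ : φ ≤ π) (hcos : 0 < cos φ)
    (hE : 0 ≤ E) (hEφ : E * (b * sin φ) < φ) (hρ : 0 ≤ ρ) (hρb : ρ ≤ b)
    (him : y = ρ * sin (y * E)) : y * E < φ := by
  by_contra! hφθ
  set θ := y * E with hθ
  have hφ2 : φ < π / 2 := lt_pi_div_two_of_cos_pos hφπ hcos
  -- Jordan's inequality bounds `E * b`, hence `θ ≤ E * b`, by `π / 2`.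
  have hθ2 : θ < π / 2 := by
    have hjordan : E * b * (2 / π * φ) ≤ E * (b * sin φ) := by
      rw [← mul_assoc E b]
      exact mul_le_mul_of_nonneg_left (mul_le_sin hφ.le hφ2.le) (mul_nonneg hE (hρ.trans hρb))
    have hEb : E * b * 2 / π < 1 := by
      refine (mul_lt_iff_lt_one_left hφ).1 ?_
      linarith [show E * b * (2 / π * φ) = E * b * 2 / π * φ by ring]
    rw [div_lt_one pi_pos] at hEb
    have hyb : y ≤ b := by nlinarith [sin_le_one θ]
    nlinarith
  have hsinθ : 0 < sin θ := sin_pos_of_pos_of_lt_pi (hφ.trans_le hφθ) (by linarith)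
  have hsinφ : 0 < sin φ := sin_pos_of_pos_of_lt_pi hφ (by linarith)
  have hsinc := sin_div_le_sin_div hφ hφθ (by linarith)
  rw [div_le_div_iff₀ (hφ.trans_le hφθ) hφ] at hsinc
  have hθb : θ ≤ E * b * sin θ := by
    nlinarith [mul_le_mul_of_nonneg_right hρb (mul_nonneg hsinθ.le hE)]
  nlinarith [mul_lt_mul_of_pos_right hEφ hsinθ, mul_le_mul_of_nonneg_left hθb hsinφ.le]

lemma re_neg_of_mul_sin_lt {a b E φ : ℝ} (hb : 0 < b) (hφ : 0 < φ) (hφπ : φ ≤ π)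
    (ha : b * cos φ = -a) (hE : 0 ≤ E) (hEφ : E * (b * sin φ) < φ) {z : ℂ}
    (hz : delayChar a b E z = 0) : z.re < 0 := by
  by_contra! hx
  wlog hy : 0 ≤ z.im generalizing z
  · exact this (by rw [delayChar_conj, hz, map_zero]) (by simpa using hx) (by simp; linarith)
  obtain ⟨hre, him⟩ := delayChar_eq_zero_iff.1 hz
  set ρ := b * exp (-(z.re * E)) with hρ
  have hρ0 : 0 < ρ := by positivity
  have hρb : ρ ≤ b :=
    mul_le_of_le_one_right hb.le (exp_le_one_iff.2 (neg_nonpos.2 (mul_nonneg hx hE)))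
  have hθφ : z.im * E < φ := by
    rcases le_or_gt (cos φ) 0 with hcos | hcos
    · exact mul_lt_of_cos_nonpos hφ.le hφπ hcos ha hE hEφ hx hy hρ0.le hρb hre him
    · exact mul_lt_of_cos_pos hφ hφπ hcos hE hEφ hρ0.le hρb him
  have hcos : ρ * cos φ < ρ * cos (z.im * E) :=
    mul_lt_mul_of_pos_left (cos_lt_cos_of_nonneg_of_le_pi (by positivity) hφπ hθφ) hρ0
  have hexp := mul_one_sub_exp_le (mul_mul_cos_lt_one hφ hφπ hE hb.le hEφ).le hE hx
  linarith [show ρ * cos φ = b * cos φ * exp (-(z.re * E)) by rw [hρ]; ring]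

lemma exists_root_of_apply_nonpos {a b E x₀ : ℝ} (hE : 0 ≤ E) (hx₀ : 0 ≤ x₀)
    (hf : x₀ + a + b * exp (-(x₀ * E)) ≤ 0) : ∃ z : ℂ, delayChar a b E z = 0 ∧ 0 ≤ z.re := by
  set X := x₀ + |a| + |b|
  have hX : 0 ≤ X + a + b * exp (-(X * E)) := by
    have hexp : |b * exp (-(X * E))| ≤ |b| := by
      rw [abs_mul, abs_exp]
      exact mul_le_of_le_one_right (abs_nonneg b)
        (exp_le_one_iff.2 (neg_nonpos.2 (mul_nonneg (by positivity) hE)))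
    linarith [neg_abs_le a, neg_abs_le (b * exp (-(X * E)))]
  have hx₀X : x₀ ≤ X := by linarith [abs_nonneg a, abs_nonneg b]
  obtain ⟨x, hx, hfx⟩ := intermediate_value_Icc hx₀X
    (by fun_prop : Continuous fun x ↦ x + a + b * exp (-(x * E))).continuousOn ⟨hf, hX⟩
  refine ⟨x, delayChar_eq_zero_iff.2 ?_, by simpa using hx₀.trans hx.1⟩
  simpa using hfx

lemma delayChar_eq_zero_of_cos_eq {a b E x θ : ℝ} (hE : 0 < E) (hb : b ≠ 0)
    (hcos : cos θ = -(x + a) * exp (x * E) / b) (hθ : θ = E * b * exp (-(x * E)) * sin θ) :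
    delayChar a b E ⟨x, θ / E⟩ = 0 := by
  rw [delayChar_eq_zero_iff]
  simp only [div_mul_cancel₀ θ hE.ne']
  have hexp : exp (-(x * E)) * exp (x * E) = 1 := by
    rw [exp_neg, inv_mul_cancel₀ (exp_pos _).ne']
  constructor
  · rw [hcos]
    field_simp
    linear_combination (-(x + a)) * hexp
  · rw [div_eq_iff hE.ne']
    linear_combination hθ

lemma exists_root_of_le_mul_sin {a b E φ : ℝ} (hb : 0 < b) (hφ : 0 < φ) (hφπ : φ ≤ π)
    (ha : b * cos φ = -a) (hEφ : φ ≤ E * (b * sin φ)) :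
    ∃ z : ℂ, delayChar a b E z = 0 ∧ 0 ≤ z.re := by
  have hE : 0 < E := by
    by_contra! hE
    nlinarith [mul_nonneg hb.le (sin_nonneg_of_nonneg_of_le_pi hφ.le hφπ)]
  -- `c x` is the value of `cos (yE)` forced by the real part of the equation at `re z = x`.
  set c : ℝ → ℝ := fun x ↦ -(x + a) * exp (x * E) / b
  -- `arccos` is clamped to `π` below `-1`, so `G` is continuous and equals `π` wherever `c ≤ -1`.
  set G : ℝ → ℝ := fun x ↦ arccos (c x) - E * b * exp (-(x * E)) * sin (arccos (c x))
  have hG0 : G 0 ≤ 0 := by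
    have hc0 : c 0 = cos φ := by
      simp only [c, zero_add, zero_mul, exp_zero, mul_one]
      field_simp
      linarith
    simp only [G, hc0, arccos_cos hφ.le hφπ, zero_mul, neg_zero, exp_zero, mul_one]
    linarith
  have hGX : 0 ≤ G (|a| + b) := by
    have hcX : c (|a| + b) ≤ -1 := by
      simp only [c]
      rw [div_le_iff₀ hb]
      nlinarith [neg_abs_le a, one_le_exp (by positivity : 0 ≤ (|a| + b) * E)]
    simp [G, arccos_eq_pi.2 hcX, pi_pos.le]
  obtain ⟨x, hx, hGx⟩ := intermediate_value_Icc (by positivity : (0 : ℝ) ≤ |a| + b)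
    (by fun_prop : Continuous G).continuousOn ⟨hG0, hGX⟩
  by_cases hc1 : c x ≤ 1
  · have hc1' : -1 ≤ c x := by
      by_contra! h
      have : G x = π := by simp [G, arccos_eq_pi.2 h.le]
      exact pi_pos.ne' (this.symm.trans hGx)
    refine ⟨⟨x, arccos (c x) / E⟩, delayChar_eq_zero_of_cos_eq hE hb.ne' (cos_arccos hc1' hc1) ?_,
      hx.1⟩
    linarith [show G x = 0 from hGx]
  · refine exists_root_of_apply_nonpos hE.le hx.1 ?_
    simp only [c] at hc1
    rw [not_le, one_lt_div hb] at hc1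
    have hexp : exp (-(x * E)) * exp (x * E) = 1 := by
      rw [exp_neg, inv_mul_cancel₀ (exp_pos _).ne']
    have hcancel : exp (-(x * E)) * (-(x + a) * exp (x * E)) = -(x + a) := by
      linear_combination (-(x + a)) * hexp
    linarith [mul_lt_mul_of_pos_left hc1 (exp_pos (-(x * E)))]

/-- Paper Theorem 2.5 (Hayes): stability for a single discrete delay. -/
theorem stmt3 (a b E : ℝ) (hE : 0 ≤ E) :
    (∀ z : ℂ, z + (a : ℂ) + (b : ℂ) * Complex.exp (-z * (E : ℂ)) = 0 → z.re < 0) ↔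
    ((-b < a ∧ |b| ≤ a) ∨
      (|a| < b ∧ E < Real.arccos (-a / b) / Real.sqrt (b ^ 2 - a ^ 2))) := by
  constructor
  · intro hstab
    by_contra! hcond
    obtain ⟨z, hz, hre⟩ : ∃ z : ℂ, delayChar a b E z = 0 ∧ 0 ≤ z.re := by
      rcases le_or_gt (a + b) 0 with hab | hab
      · exact exists_root_of_apply_nonpos hE le_rfl (by simpa using hab)
      have hab' : |a| < b :=
        abs_lt.2 ⟨by linarith, (lt_abs.1 (hcond.1 (by linarith))).resolve_right (by linarith)⟩
      have hEφ := hcond.2 hab'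
      rw [← not_lt, lt_arccos_div_sqrt_iff hab', not_lt] at hEφ
      exact exists_root_of_le_mul_sin ((abs_nonneg a).trans_lt hab') (arccos_neg_div_pos hab')
        (arccos_le_pi _) (mul_cos_arccos_neg_div hab') hEφ
    exact (hstab z hz).not_ge hre
  · rintro (⟨hab, hba⟩ | ⟨hab, hEφ⟩) z hz
    · exact re_neg_of_abs_le hE hab hba hz
    · exact re_neg_of_mul_sin_lt ((abs_nonneg a).trans_lt hab) (arccos_neg_div_pos hab)
        (arccos_le_pi _) (mul_cos_arccos_neg_div hab) hE ((lt_arccos_div_sqrt_iff hab).1 hEφ) hz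
end

section
/- Let a, b ∈ ℝ and let η be a Borel probability measure on [0,∞) with ∫₀^∞ e^{ντ} dη(τ) < ∞ for some ν > 0. If a ≤ -b, then the characteristic equation λ + a + b ∫₀^∞ e^{-λτ} dη(τ) = 0 has a real root λ ≥ 0; moreover, if a < -b, it has a real root λ > 0. -/
/-!
For real `λ ≥ 0` the characteristic function is real: `D(λ) = λ + a + b L(λ)` with
`L(λ) = ∫ e^{-λτ} dη(τ)`. As `η` lives on `[0, ∞)`, the integrand is bounded by `1` there,
so `L` is continuous on `[0, ∞)` with `|L| ≤ 1` and `L(0) = 1`. Hence `D(0) = a + b ≤ 0`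
while `D(|a| + |b|) ≥ 0`, and the intermediate value theorem gives a root `λ ≥ 0`;
it is not `0` when `a + b < 0`.
-/

open MeasureTheory Set

section LaplaceTransform

variable {η : Measure ℝ}

lemma ae_nonneg_of_measure_Iio_eq_zero (h : η (Iio 0) = 0) : ∀ᵐ τ ∂η, 0 ≤ τ := by
  simpa [ae_iff, Iio] using h

lemma norm_exp_neg_mul_le_one {l τ : ℝ} (hl : 0 ≤ l) (hτ : 0 ≤ τ) :
    ‖Real.exp (-l * τ)‖ ≤ 1 := by
  rw [Real.norm_eq_abs, Real.abs_exp, Real.exp_le_one_iff]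
  nlinarith

lemma continuousOn_integral_exp_neg_mul [IsFiniteMeasure η] (hη : ∀ᵐ τ ∂η, 0 ≤ τ) :
    ContinuousOn (fun l => ∫ τ, Real.exp (-l * τ) ∂η) (Ici 0) :=
  continuousOn_of_dominated (bound := fun _ => 1)
    (fun _ _ => (by fun_prop : Continuous fun τ => Real.exp (-_ * τ)).aestronglyMeasurable)
    (fun _ hl => hη.mono fun _ hτ => norm_exp_neg_mul_le_one hl hτ)
    (integrable_const 1)
    (ae_of_all _ fun _ => by fun_prop)

lemma abs_integral_exp_neg_mul_le_one [IsProbabilityMeasure η] (hη : ∀ᵐ τ ∂η, 0 ≤ τ)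
    {l : ℝ} (hl : 0 ≤ l) : |∫ τ, Real.exp (-l * τ) ∂η| ≤ 1 := by
  simpa using
    norm_integral_le_of_norm_le_const (hη.mono fun _ hτ => norm_exp_neg_mul_le_one hl hτ)

lemma integral_cexp_neg_ofReal_mul (l : ℝ) :
    ∫ τ, Complex.exp (-(l : ℂ) * τ) ∂η = ((∫ τ, Real.exp (-l * τ) ∂η : ℝ) : ℂ) := by
  rw [← integral_complex_ofReal]
  push_cast
  rfl

end LaplaceTransform

lemma exists_nonneg_root_add_mul_integral_exp_neg_mul (a b : ℝ) {η : Measure ℝ}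
    [IsProbabilityMeasure η] (hη : ∀ᵐ τ ∂η, 0 ≤ τ) (hab : a + b ≤ 0) :
    ∃ l : ℝ, 0 ≤ l ∧ l + a + b * ∫ τ, Real.exp (-l * τ) ∂η = 0 := by
  set D : ℝ → ℝ := fun l => l + a + b * ∫ τ, Real.exp (-l * τ) ∂η
  set L := |a| + |b|
  have hL : 0 ≤ L := by positivity
  have hD0 : D 0 = a + b := by simp [D]
  have hDL : 0 ≤ D L := by
    have hbI : -|b| ≤ b * ∫ τ, Real.exp (-L * τ) ∂η := by
      have hI := abs_integral_exp_neg_mul_le_one hη hL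
      calc -|b| ≤ -|b * ∫ τ, Real.exp (-L * τ) ∂η| := by
            rw [abs_mul]
            exact neg_le_neg (mul_le_of_le_one_right (abs_nonneg b) hI)
        _ ≤ _ := neg_abs_le _
    simp only [D]
    linarith [neg_abs_le a]
  have hDcont : ContinuousOn D (Icc 0 L) :=
    (continuousOn_id.add continuousOn_const).add <| continuousOn_const.mul <|
      (continuousOn_integral_exp_neg_mul hη).mono Icc_subset_Ici_self
  obtain ⟨l, hl, hDl⟩ := intermediate_value_Icc hL hDcont ⟨hD0 ▸ hab, hDL⟩
  exact ⟨l, hl.1, hDl⟩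

theorem stmt4_general (a b : ℝ) (η : Measure ℝ) [IsProbabilityMeasure η]
    (hsupp : η (Set.Iio 0) = 0)
    (hab : a ≤ -b) :
    (∃ l : ℝ, 0 ≤ l ∧
      (l : ℂ) + (a : ℂ) + (b : ℂ) * (∫ τ, Complex.exp (-(l : ℂ) * τ) ∂η) = 0) ∧
    (a < -b → ∃ l : ℝ, 0 < l ∧
      (l : ℂ) + (a : ℂ) + (b : ℂ) * (∫ τ, Complex.exp (-(l : ℂ) * τ) ∂η) = 0) := by
  obtain ⟨l, hl, hroot⟩ := exists_nonneg_root_add_mul_integral_exp_neg_mul a b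
    (ae_nonneg_of_measure_Iio_eq_zero hsupp) (by linarith)
  have hroot_ℂ : (l : ℂ) + a + b * (∫ τ, Complex.exp (-(l : ℂ) * τ) ∂η) = 0 := by
    rw [integral_cexp_neg_ofReal_mul]
    exact_mod_cast hroot
  refine ⟨⟨l, hl, hroot_ℂ⟩, fun hlt => ⟨l, hl.lt_of_ne ?_, hroot_ℂ⟩⟩
  rintro rfl
  linarith [show a + b = 0 by simpa using hroot]

/-- Paper statement (i) after Theorem 2.5: when `a ≤ -b` the characteristic
equation has a nonnegative real root, positive when `a < -b`. -/
theorem stmt4 (a b : ℝ) (η : Measure ℝ) [IsProbabilityMeasure η]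
    (hsupp : η (Set.Iio 0) = 0)
    (hν : ∃ ν > 0, Integrable (fun τ => Real.exp (ν * τ)) η)
    (hab : a ≤ -b) :
    (∃ l : ℝ, 0 ≤ l ∧
      (l : ℂ) + (a : ℂ) + (b : ℂ) * (∫ τ, Complex.exp (-(l : ℂ) * τ) ∂η) = 0) ∧
    (a < -b → ∃ l : ℝ, 0 < l ∧
      (l : ℂ) + (a : ℂ) + (b : ℂ) * (∫ τ, Complex.exp (-(l : ℂ) * τ) ∂η) = 0) :=
  stmt4_general a b η hsupp hab
end

section
/- Let a ∈ (-1,1) and let η be a Borel probability measure on [0,∞) with ∫₀^∞ e^{ντ} dη(τ) < ∞ for some ν > 0. If the characteristic equation λ + a + ∫₀^∞ e^{-λτ} dη(τ) = 0 has a root λ with Re(λ) ≥ 0, then there exists ω_s ∈ (0, ω_c], where ω_c = √(1-a²), such that C(ω_s) = ∫₀^∞ cos(ω_s τ) dη(τ) = -a and S(ω_s) = ∫₀^∞ sin(ω_s τ) dη(τ) ≥ ω_s. -/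
/-!
Deform the delays: `D_t(z) = z + a + ∫ e^{-tzτ} dη(τ)`. The only root of `D_0` is `-1 - a < 0`,
and for `t ≥ 0` every root in the closed right half-plane satisfies `‖z‖ ≤ |a| + 1`, so among the
parameters `t ∈ [0, 1]` for which `D_t` has a root with `Re z ≥ 0` there is a least one, `t₀ > 0`.
A root of `D_{t₀}` with `Re z > 0` would survive a small decrease of `t` (a Hurwitz argument:
minimum modulus principle on a small circle around the isolated zero), so `D_{t₀}` has a root
`i y` with `y ≠ 0`. Its real and imaginary parts read `C(t₀ y) = -a` and `S(t₀ y) = y`, and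
`ω_s = t₀ |y|` works because `t₀ ≤ 1` and `a² + y² = ‖∫ e^{i ω_s τ} dη(τ)‖² ≤ 1`.
-/

open MeasureTheory ProbabilityTheory Complex Set Filter Metric Topology

section LaplaceTransform

variable {μ : Measure ℝ} {z : ℂ}

lemma norm_cexp_mul_ofReal_le_one {x : ℝ} (hz : z.re ≤ 0) (hx : 0 ≤ x) :
    ‖cexp (z * x)‖ ≤ 1 := by
  rw [norm_exp, re_mul_ofReal, Real.exp_le_one_iff]
  exact mul_nonpos_of_nonpos_of_nonneg hz hx

variable (hμ : ∀ᵐ x ∂μ, 0 ≤ x)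
include hμ

lemma norm_complexMGF_le_one [IsProbabilityMeasure μ] (hz : z.re ≤ 0) :
    ‖complexMGF id μ z‖ ≤ 1 := by
  simpa [complexMGF] using norm_integral_le_of_norm_le_const (μ := μ) (C := 1)
    (hμ.mono fun x hx ↦ norm_cexp_mul_ofReal_le_one hz hx)

lemma continuousOn_complexMGF [IsFiniteMeasure μ] :
    ContinuousOn (complexMGF id μ) {z | z.re ≤ 0} :=
  continuousOn_of_dominated (bound := fun _ ↦ 1)
    (fun _ _ ↦ by fun_prop)
    (fun _ hz ↦ hμ.mono fun _ hx ↦ norm_cexp_mul_ofReal_le_one hz hx)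
    (integrable_const 1) (ae_of_all _ fun _ ↦ by fun_prop)

lemma Iic_subset_integrableExpSet [IsFiniteMeasure μ] : Iic 0 ⊆ integrableExpSet id μ := by
  intro t ht
  refine (integrable_const (1 : ℝ)).mono' (by fun_prop) (hμ.mono fun x hx ↦ ?_)
  rw [Real.norm_eq_abs, abs_of_pos (Real.exp_pos _), Real.exp_le_one_iff]
  exact mul_nonpos_of_nonpos_of_nonneg ht hx

lemma analyticAt_complexMGF_of_re_neg [IsFiniteMeasure μ] (hz : z.re < 0) :
    AnalyticAt ℂ (complexMGF id μ) z :=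
  analyticAt_complexMGF <| interior_mono (Iic_subset_integrableExpSet hμ) <| by
    rwa [interior_Iic]

end LaplaceTransform

lemma integrable_cexp_ofReal_mul_I (μ : Measure ℝ) [IsFiniteMeasure μ] (ω : ℝ) :
    Integrable (fun x : ℝ ↦ cexp (ω * x * I)) μ :=
  (integrable_const (1 : ℝ)).mono' (by fun_prop) (ae_of_all _ fun x ↦ by
    rw [← ofReal_mul, norm_exp_ofReal_mul_I])

lemma re_charFun (μ : Measure ℝ) [IsFiniteMeasure μ] (ω : ℝ) :
    (charFun μ ω).re = ∫ x, Real.cos (ω * x) ∂μ := by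
  rw [charFun_apply_real, ← RCLike.re_to_complex, ← integral_re (integrable_cexp_ofReal_mul_I μ ω)]
  simp_rw [RCLike.re_to_complex, ← ofReal_mul, exp_ofReal_mul_I_re]

lemma im_charFun (μ : Measure ℝ) [IsFiniteMeasure μ] (ω : ℝ) :
    (charFun μ ω).im = ∫ x, Real.sin (ω * x) ∂μ := by
  rw [charFun_apply_real, ← RCLike.im_to_complex, ← integral_im (integrable_cexp_ofReal_mul_I μ ω)]
  simp_rw [RCLike.im_to_complex, ← ofReal_mul, exp_ofReal_mul_I_im]

lemma exists_mem_ball_eq_zero_of_norm_lt {g : ℂ → ℂ} {c : ℂ} {r m : ℝ} (hr : 0 < r)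
    (hg : DiffContOnCl ℂ g (ball c r)) (hc : ‖g c‖ < m)
    (hsphere : ∀ z ∈ sphere c r, m ≤ ‖g z‖) :
    ∃ z ∈ ball c r, g z = 0 := by
  by_contra! hne
  have hm : 0 < m := (norm_pos_iff.2 (hne c (mem_ball_self hr))).trans hc
  have hne' : ∀ z ∈ closure (ball c r), g z ≠ 0 := by
    rw [closure_ball c hr.ne', ← ball_union_sphere]
    rintro z (hz | hz)
    exacts [hne z hz, norm_pos_iff.1 (hm.trans_le (hsphere z hz))]
  have hmax : ‖(g c)⁻¹‖ ≤ m⁻¹ :=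
    Complex.norm_le_of_forall_mem_frontier_norm_le isBounded_ball (hg.inv hne')
      (fun z hz ↦ by
        rw [frontier_ball c hr.ne'] at hz
        change ‖(g z)⁻¹‖ ≤ m⁻¹
        rw [norm_inv]
        exact inv_anti₀ hm (hsphere z hz))
      (subset_closure (mem_ball_self hr))
  rw [norm_inv, inv_le_inv₀ (norm_pos_iff.2 (hne c (mem_ball_self hr))) hm] at hmax
  exact hmax.not_gt hc

lemma exists_sphere_forall_le_norm {F : Type*} [NormedAddCommGroup F] {f : ℂ → F} {c : ℂ}
    (hf : ∀ᶠ z in 𝓝 c, ContinuousAt f z) (hne : ∀ᶠ z in 𝓝[≠] c, f z ≠ 0) {R : ℝ}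
    (hR : 0 < R) : ∃ r ∈ Ioo 0 R, ∃ m > 0, ∀ z ∈ sphere c r, m ≤ ‖f z‖ := by
  obtain ⟨ε, hε, hball⟩ := Metric.eventually_nhds_iff.1 (eventually_nhdsWithin_iff.1
    ((hf.filter_mono nhdsWithin_le_nhds).and hne))
  obtain ⟨r, hr, hrε, hrR⟩ : ∃ r, 0 < r ∧ r < ε ∧ r < R :=
    ⟨min ε R / 2, by positivity, by linarith [min_le_left ε R], by linarith [min_le_right ε R]⟩
  have hsphere : ∀ z ∈ sphere c r, ContinuousAt f z ∧ f z ≠ 0 := fun z hz ↦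
    hball (by rw [mem_sphere.1 hz]; exact hrε) (ne_of_mem_sphere hz hr.ne')
  obtain ⟨z₀, hz₀, hmin⟩ := (isCompact_sphere c r).exists_isMinOn
    (NormedSpace.sphere_nonempty.2 hr.le)
    (fun z hz ↦ (hsphere z hz).1.norm.continuousWithinAt)
  exact ⟨r, ⟨hr, hrR⟩, ‖f z₀‖, norm_pos_iff.2 (hsphere z₀ hz₀).2,
    fun z hz ↦ hmin hz⟩

/-- The characteristic function of `ẋ = -a x - ∫ x(· - tτ) dμ(τ)`, the delay equation with all
delays scaled by `t`; `complexMGF id μ (-w)` is the Laplace transform `∫ e^{-wτ} dμ(τ)`. -/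
noncomputable def delayCharFun (a : ℝ) (μ : Measure ℝ) (t : ℝ) (z : ℂ) : ℂ :=
  z + a + complexMGF id μ (-(t * z))

section DelayCharFun

variable {a : ℝ} {μ : Measure ℝ} [IsProbabilityMeasure μ] {t : ℝ} {z : ℂ}

lemma delayCharFun_zero_left : delayCharFun a μ 0 z = z + a + 1 := by
  simp [delayCharFun, complexMGF]

lemma delayCharFun_zero_right : delayCharFun a μ t 0 = a + 1 := by
  simp [delayCharFun, complexMGF]

lemma re_neg_ofReal_mul_nonpos (ht : 0 ≤ t) (hz : 0 ≤ z.re) : (-(t * z)).re ≤ 0 := by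
  simpa using mul_nonneg ht hz

variable (hμ : ∀ᵐ x ∂μ, 0 ≤ x)
include hμ

lemma norm_le_of_delayCharFun_eq_zero (ht : 0 ≤ t) (hz : 0 ≤ z.re)
    (hD : delayCharFun a μ t z = 0) : ‖z‖ ≤ |a| + 1 := by
  have hz' : a + complexMGF id μ (-(t * z)) = -z := by
    rw [delayCharFun] at hD; linear_combination hD
  calc ‖z‖ = ‖(a : ℂ) + complexMGF id μ (-(t * z))‖ := by rw [hz', norm_neg]
    _ ≤ ‖(a : ℂ)‖ + ‖complexMGF id μ (-(t * z))‖ := norm_add_le _ _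
    _ ≤ |a| + 1 := by
        rw [norm_real, Real.norm_eq_abs]
        exact add_le_add le_rfl (norm_complexMGF_le_one hμ (re_neg_ofReal_mul_nonpos ht hz))

lemma delayCharFun_ne_zero_of_one_sub_lt_re (ht : 0 ≤ t) (hz₀ : 0 ≤ z.re) (hz : 1 - a < z.re) :
    delayCharFun a μ t z ≠ 0 := by
  have hL := (abs_re_le_norm _).trans
    (norm_complexMGF_le_one hμ (re_neg_ofReal_mul_nonpos ht hz₀))
  intro hD
  have hre := congrArg re hD
  simp only [delayCharFun, add_re, ofReal_re, zero_re] at hre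
  linarith [neg_abs_le (complexMGF id μ (-(t * z))).re]

lemma continuousOn_delayCharFun :
    ContinuousOn (fun p : ℝ × ℂ ↦ delayCharFun a μ p.1 p.2) (Ici 0 ×ˢ {z | 0 ≤ z.re}) := by
  refine (continuousOn_snd.add continuousOn_const).add
    ((continuousOn_complexMGF hμ).comp (by fun_prop) fun p hp ↦ ?_)
  exact re_neg_ofReal_mul_nonpos hp.1 hp.2

lemma continuousAt_delayCharFun (ht : 0 < t) (hz : 0 < z.re) :
    ContinuousAt (fun p : ℝ × ℂ ↦ delayCharFun a μ p.1 p.2) (t, z) :=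
  (continuousOn_delayCharFun hμ).continuousAt <|
    prod_mem_nhds (Ici_mem_nhds ht) (continuous_re.continuousAt.preimage_mem_nhds (Ici_mem_nhds hz))

lemma analyticOnNhd_delayCharFun (ht : 0 < t) :
    AnalyticOnNhd ℂ (delayCharFun a μ t) {z | 0 < z.re} := fun z hz ↦ by
  have hre : (-(t * z)).re < 0 := by simpa using mul_pos ht hz
  have hlin : AnalyticAt ℂ (fun w : ℂ ↦ -(t * w)) z := by fun_prop
  exact (analyticAt_id.add analyticAt_const).add
    ((analyticAt_complexMGF_of_re_neg hμ hre).comp_of_eq hlin rfl)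

lemma eventually_delayCharFun_ne_zero (ht : 0 < t) (hz : 0 < z.re) :
    ∀ᶠ w in 𝓝[≠] z, delayCharFun a μ t w ≠ 0 := by
  have hf := analyticOnNhd_delayCharFun hμ (a := a) ht
  refine (hf z hz).eventually_eq_zero_or_eventually_ne_zero.resolve_left fun h ↦ ?_
  have hx : (0 : ℝ) < ((|a| + 2 : ℝ) : ℂ).re := by simp only [ofReal_re]; positivity
  exact delayCharFun_ne_zero_of_one_sub_lt_re hμ ht.le hx.le
    (by simp only [ofReal_re]; linarith [neg_abs_le a])
    (hf.eqOn_zero_of_preconnected_of_eventuallyEq_zero (convex_halfSpace_re_gt 0).isPreconnected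
      hz h hx)

lemma eventually_exists_delayCharFun_eq_zero {t₀ : ℝ} {w : ℂ} (ht₀ : 0 < t₀) (hw : 0 < w.re)
    (hD : delayCharFun a μ t₀ w = 0) :
    ∀ᶠ t in 𝓝 t₀, ∃ z : ℂ, 0 < z.re ∧ delayCharFun a μ t z = 0 := by
  have hf := analyticOnNhd_delayCharFun hμ (a := a) ht₀
  obtain ⟨r, ⟨hr, hrw⟩, m, hm, hsphere⟩ := exists_sphere_forall_le_norm
    ((hf w hw).eventually_analyticAt.mono fun _ h ↦ h.continuousAt)
    (eventually_delayCharFun_ne_zero hμ ht₀ hw) hw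
  have hball : closedBall w r ⊆ {z | 0 < z.re} := fun z hz ↦ by
    have := (abs_le.1 ((abs_re_le_norm (z - w)).trans (mem_closedBall_iff_norm.1 hz))).1
    simp only [sub_re] at this
    show 0 < z.re
    linarith
  have hclose : ∀ᶠ t in 𝓝 t₀, ∀ z ∈ closedBall w r,
      ‖delayCharFun a μ t z - delayCharFun a μ t₀ z‖ < m / 2 :=
    (isCompact_closedBall w r).eventually_forall_of_forall_eventually fun z hz ↦ by
      have hcont := continuousAt_delayCharFun hμ (a := a) ht₀ (hball hz)
      have hcont' : ContinuousAt (fun p : ℝ × ℂ ↦ delayCharFun a μ t₀ p.2) (t₀, z) :=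
        hcont.comp_of_eq (continuousAt_const.prodMk continuousAt_snd) rfl
      exact (hcont.sub hcont').norm.eventually_lt continuousAt_const (by simpa using half_pos hm)
  filter_upwards [hclose, lt_mem_nhds ht₀] with t hclose ht
  have hg : DiffContOnCl ℂ (delayCharFun a μ t) (ball w r) :=
    ((analyticOnNhd_delayCharFun hμ ht).differentiableOn.mono
      (by rwa [closure_ball w hr.ne'])).diffContOnCl
  obtain ⟨z, hz, hDz⟩ := exists_mem_ball_eq_zero_of_norm_lt hr hg (m := m / 2)
    (by simpa [hD] using hclose w (mem_closedBall_self hr.le))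
    (fun z hz ↦ by
      have h₁ := hsphere z hz
      have h₂ := hclose z (sphere_subset_closedBall hz)
      have h₃ := norm_sub_norm_le (delayCharFun a μ t₀ z) (delayCharFun a μ t z)
      rw [norm_sub_rev] at h₃
      linarith)
  exact ⟨z, hball (ball_subset_closedBall hz), hDz⟩

lemma exists_minimal_delayCharFun_eq_zero (ha : -1 < a) (hz : 0 ≤ z.re)
    (hD : delayCharFun a μ 1 z = 0) :
    ∃ t₀ ∈ Ioc (0 : ℝ) 1, ∃ w : ℂ, 0 ≤ w.re ∧ delayCharFun a μ t₀ w = 0 ∧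
      ∀ t ∈ Ico 0 t₀, ∀ z : ℂ, 0 ≤ z.re → delayCharFun a μ t z ≠ 0 := by
  set S : Set (ℝ × ℂ) := Icc 0 1 ×ˢ {z | 0 ≤ z.re}
  set Z := S ∩ (fun p : ℝ × ℂ ↦ delayCharFun a μ p.1 p.2) ⁻¹' {0}
  have hSclosed : IsClosed S := isClosed_Icc.prod (isClosed_le continuous_const continuous_re)
  have hZ : IsCompact Z := by
    refine ((isCompact_Icc (a := (0 : ℝ)) (b := 1)).prod
      (isCompact_closedBall (0 : ℂ) (|a| + 1))).of_isClosed_subset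
      (((continuousOn_delayCharFun hμ).mono (prod_mono Icc_subset_Ici_self subset_rfl)
        ).preimage_isClosed_of_isClosed hSclosed isClosed_singleton) ?_
    rintro ⟨t, z⟩ ⟨⟨ht, hz⟩, hD⟩
    exact ⟨ht, mem_closedBall_zero_iff.2 (norm_le_of_delayCharFun_eq_zero hμ ht.1 hz hD)⟩
  obtain ⟨⟨t₀, w⟩, ⟨⟨ht₀, hw⟩, hDw⟩, hmin⟩ := hZ.exists_isMinOn
    (⟨(1, z), ⟨⟨right_mem_Icc.2 zero_le_one, hz⟩, hD⟩⟩ : Z.Nonempty) continuousOn_fst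
  change t₀ ∈ Icc 0 1 at ht₀
  change 0 ≤ w.re at hw
  change delayCharFun a μ t₀ w = 0 at hDw
  have ht₀pos : 0 < t₀ := by
    refine ht₀.1.lt_of_ne' fun h ↦ ?_
    have hre := congrArg re hDw
    simp only [h, delayCharFun_zero_left, add_re, ofReal_re, one_re, zero_re] at hre
    linarith
  refine ⟨t₀, ⟨ht₀pos, ht₀.2⟩, w, hw, hDw, fun t ht z hz hDz ↦ ?_⟩
  exact (hmin (show (t, z) ∈ Z from ⟨⟨⟨ht.1, ht.2.le.trans ht₀.2⟩, hz⟩, hDz⟩)).not_gt ht.2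

end DelayCharFun

section PurelyImaginaryRoot

variable {a : ℝ} {μ : Measure ℝ} {t y : ℝ}

lemma charFun_mul_abs_of_delayCharFun_eq_zero (hD : delayCharFun a μ t (y * I) = 0) :
    charFun μ (t * |y|) = -a + |y| * I := by
  have h : charFun μ (-(t * y)) = -a - y * I := by
    have harg : -((t : ℂ) * (y * I)) = ((-(t * y) : ℝ) : ℂ) * I := by push_cast; ring
    rw [delayCharFun, harg, complexMGF_id_mul_I] at hD
    linear_combination hD
  rcases le_or_gt 0 y with hy | hy
  · rw [abs_of_nonneg hy, ← neg_neg (t * y), charFun_neg, h]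
    simp [map_sub, conj_ofReal]
  · rw [abs_of_neg hy, mul_neg, h]
    push_cast; ring

lemma exists_frequency_of_delayCharFun_eq_zero [IsProbabilityMeasure μ] (ht : t ∈ Ioc 0 1)
    (hy : y ≠ 0) (hD : delayCharFun a μ t (y * I) = 0) :
    ∃ ω ∈ Ioc 0 √(1 - a ^ 2),
      ∫ τ, Real.cos (ω * τ) ∂μ = -a ∧ ∫ τ, Real.sin (ω * τ) ∂μ ≥ ω := by
  have hφ := charFun_mul_abs_of_delayCharFun_eq_zero hD
  have hy' : 0 < |y| := abs_pos.2 hy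
  have hnorm : a ^ 2 + |y| ^ 2 ≤ 1 := by
    have := norm_charFun_le_one (μ := μ) (t * |y|)
    rwa [hφ, ← ofReal_neg, norm_add_mul_I, Real.sqrt_le_one, neg_sq] at this
  have hty : t * |y| ≤ |y| := mul_le_of_le_one_left hy'.le ht.2
  refine ⟨t * |y|, ⟨mul_pos ht.1 hy', hty.trans (Real.le_sqrt_of_sq_le (by linarith))⟩, ?_, ?_⟩
  · rw [← re_charFun, hφ]; simp
  · rw [← im_charFun, hφ]; simpa using hty

end PurelyImaginaryRoot

theorem stmt6_general (a : ℝ) (ha : a ∈ Set.Ioo (-1 : ℝ) 1)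
    (η : Measure ℝ) [IsProbabilityMeasure η]
    (hsupp : η (Set.Iio 0) = 0)
    (hroot : ∃ z : ℂ, 0 ≤ z.re ∧
      z + (a : ℂ) + (∫ τ, Complex.exp (-z * τ) ∂η) = 0) :
    ∃ ωs : ℝ, ωs ∈ Set.Ioc 0 (Real.sqrt (1 - a ^ 2)) ∧
      (∫ τ, Real.cos (ωs * τ) ∂η) = -a ∧
      (∫ τ, Real.sin (ωs * τ) ∂η) ≥ ωs := by
  have hη : ∀ᵐ τ ∂η, 0 ≤ τ :=
    (measure_eq_zero_iff_ae_notMem.1 hsupp).mono fun _ h ↦ not_lt.1 h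
  obtain ⟨z, hz, hDz⟩ := hroot
  obtain ⟨t₀, ht₀, w, hw, hDw, hmin⟩ := exists_minimal_delayCharFun_eq_zero hη ha.1 hz
    (by simpa [delayCharFun, complexMGF] using hDz)
  have hw_re : w.re = 0 := by
    by_contra hne
    obtain ⟨t, ⟨z, hz, hDz⟩, ht, htt₀⟩ :=
      (((eventually_exists_delayCharFun_eq_zero hη ht₀.1 (hw.lt_of_ne' hne) hDw).filter_mono
        nhdsWithin_le_nhds).and (Ioo_mem_nhdsLT ht₀.1)).exists
    exact hmin t ⟨ht.le, htt₀⟩ z hz.le hDz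
  have hw_eq : w = w.im * I := Complex.ext (by simp [hw_re]) (by simp)
  have hw_im : w.im ≠ 0 := fun h ↦ by
    rw [hw_eq, h, ofReal_zero, zero_mul, delayCharFun_zero_right] at hDw
    exact (by linarith [ha.1] : a + 1 ≠ 0) (by exact_mod_cast hDw)
  exact exists_frequency_of_delayCharFun_eq_zero ht₀ hw_im (hw_eq ▸ hDw)

/-- Paper Proposition 3.1: necessary condition for instability. -/
theorem stmt6 (a : ℝ) (ha : a ∈ Set.Ioo (-1 : ℝ) 1)
    (η : Measure ℝ) [IsProbabilityMeasure η]
    (hsupp : η (Set.Iio 0) = 0)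
    (hν : ∃ ν > 0, Integrable (fun τ => Real.exp (ν * τ)) η)
    (hroot : ∃ z : ℂ, 0 ≤ z.re ∧
      z + (a : ℂ) + (∫ τ, Complex.exp (-z * τ) ∂η) = 0) :
    ∃ ωs : ℝ, ωs ∈ Set.Ioc 0 (Real.sqrt (1 - a ^ 2)) ∧
      (∫ τ, Real.cos (ωs * τ) ∂η) = -a ∧
      (∫ τ, Real.sin (ωs * τ) ∂η) ≥ ωs :=
  stmt6_general a ha η hsupp hroot
end

section
/- Let c ≈ 0.7246 and θ_c ≈ 2.3311 be defined by: θ_c is the unique θ ∈ (0,π) with 1 - θ·sin(θ) = cos(θ), and c = sin(θ_c). Let a ∈ (-1,1) and E > 0 with E < arccos(-a)/ω_c, where ω_c = √(1-a²). Suppose ω_s ∈ [0, ω_c], and suppose there are τ₁, τ₂ ≥ 0 and p₁, p₂ > 0 with p₁ + p₂ = 1, p₁τ₁ + p₂τ₂ = E, and p₁cos(ω_s τ₁) + p₂cos(ω_s τ₂) = -a. Then ω_s E < θ_c and cos(ω_s E) > -a. -/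
/-!
Write `m = ωs E`. Since `m < arccos (-a) ≤ π`, `cos m > -a` is immediate. The function
`g θ = θ sin θ + cos θ` has `g' θ = θ cos θ`, so it rises from `g 0 = 1` on `[0, π/2]` and falls
on `[π/2, π]`; hence `θc ≥ π/2` and `g ≤ 1` on `[θc, π]`. For such `m`, `g m ≤ 1` says exactly
that the tangent line of `cos` at `m` stays below `cos` on all of `[0, ∞)`, so Jensen's inequality
holds for `cos` at any two-point distribution on `[0, ∞)` with mean `m`. If `m ≥ θc`, this gives
`cos m ≤ p₁ cos (ωs τ₁) + p₂ cos (ωs τ₂) = -a`, contradicting `cos m > -a`.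
-/

open Real Set

lemma hasDerivAt_mul_sin_add_cos (x : ℝ) :
    HasDerivAt (fun θ : ℝ => θ * sin θ + cos θ) (x * cos x) x := by
  have h := ((hasDerivAt_id x).mul (hasDerivAt_sin x)).add (hasDerivAt_cos x)
  simp only [id_eq, one_mul] at h
  exact h.congr_deriv (by ring)

lemma strictMonoOn_mul_sin_add_cos :
    StrictMonoOn (fun θ : ℝ => θ * sin θ + cos θ) (Icc 0 (π / 2)) := by
  refine strictMonoOn_of_deriv_pos (convex_Icc _ _) (by fun_prop) fun x hx => ?_
  rw [interior_Icc] at hx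
  rw [(hasDerivAt_mul_sin_add_cos x).deriv]
  exact mul_pos hx.1 (cos_pos_of_mem_Ioo ⟨by linarith [hx.1, pi_pos], hx.2⟩)

lemma antitoneOn_mul_sin_add_cos :
    AntitoneOn (fun θ : ℝ => θ * sin θ + cos θ) (Icc (π / 2) π) := by
  refine antitoneOn_of_deriv_nonpos (convex_Icc _ _) (by fun_prop)
    (fun x _ => (hasDerivAt_mul_sin_add_cos x).differentiableAt.differentiableWithinAt)
    fun x hx => ?_
  rw [interior_Icc] at hx
  rw [(hasDerivAt_mul_sin_add_cos x).deriv]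
  have hcos : cos x ≤ 0 := cos_nonpos_of_pi_div_two_le_of_le hx.1.le (by linarith [hx.2, pi_pos])
  nlinarith [hx.1, pi_pos]

lemma pi_div_two_le_of_mul_sin_add_cos_eq_one {θ : ℝ} (hθ : 0 < θ)
    (h : θ * sin θ + cos θ = 1) : π / 2 ≤ θ := by
  by_contra! hlt
  have := strictMonoOn_mul_sin_add_cos ⟨le_rfl, by positivity⟩ ⟨hθ.le, hlt.le⟩ hθ
  simp only [zero_mul, cos_zero, zero_add] at this
  linarith

lemma hasDerivAt_cos_add_mul (s x : ℝ) :
    HasDerivAt (fun t : ℝ => cos t + s * t) (s - sin x) x :=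
  ((hasDerivAt_cos x).add ((hasDerivAt_id x).const_mul s)).congr_deriv (by ring)

lemma monotoneOn_cos_add_mul {s a b : ℝ} (h : ∀ x ∈ Ioo a b, sin x ≤ s) :
    MonotoneOn (fun t : ℝ => cos t + s * t) (Icc a b) := by
  have hd := hasDerivAt_cos_add_mul s
  refine monotoneOn_of_deriv_nonneg (convex_Icc _ _) (by fun_prop)
    (fun x _ => (hd x).differentiableAt.differentiableWithinAt) fun x hx => ?_
  rw [interior_Icc] at hx
  rw [(hd x).deriv]
  linarith [h x hx]

lemma antitoneOn_cos_add_mul {s a b : ℝ} (h : ∀ x ∈ Ioo a b, s ≤ sin x) :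
    AntitoneOn (fun t : ℝ => cos t + s * t) (Icc a b) := by
  have hd := hasDerivAt_cos_add_mul s
  refine antitoneOn_of_deriv_nonpos (convex_Icc _ _) (by fun_prop)
    (fun x _ => (hd x).differentiableAt.differentiableWithinAt) fun x hx => ?_
  rw [interior_Icc] at hx
  rw [(hd x).deriv]
  linarith [h x hx]

lemma sin_le_sin_of_le_pi_sub {m x : ℝ} (hm : π / 2 ≤ m) (hx₀ : 0 ≤ x) (hx : x ≤ π - m) :
    sin x ≤ sin m := by
  rw [← sin_pi_sub m]
  exact sin_le_sin_of_le_of_le_pi_div_two (by linarith [pi_pos]) (by linarith) hx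

lemma cos_add_mul_sin_le {m θ : ℝ} (hm : π / 2 ≤ m) (hmπ : m ≤ π)
    (hg : m * sin m + cos m ≤ 1) (hθ : 0 ≤ θ) :
    cos m + sin m * m ≤ cos θ + sin m * θ := by
  have hπ := pi_pos
  have hsin : 0 ≤ sin m := sin_nonneg_of_nonneg_of_le_pi (by linarith) hmπ
  have up_left : MonotoneOn (fun t => cos t + sin m * t) (Icc 0 (π - m)) :=
    monotoneOn_cos_add_mul fun x hx => sin_le_sin_of_le_pi_sub hm hx.1.le hx.2.le
  have down : AntitoneOn (fun t => cos t + sin m * t) (Icc (π - m) m) :=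
    antitoneOn_cos_add_mul fun x hx => by
      simpa only [sin_pi_sub, min_self] using strictConcaveOn_sin_Icc.concaveOn.min_le_of_mem_Icc
        ⟨by linarith, by linarith⟩ ⟨by linarith, hmπ⟩ (Ioo_subset_Icc_self hx)
  have up_right : MonotoneOn (fun t => cos t + sin m * t) (Icc m π) :=
    monotoneOn_cos_add_mul fun x hx => by
      simpa only [sin_pi_sub] using sin_le_sin_of_le_pi_sub hm (x := π - x)
        (by linarith [hx.2]) (by linarith [hx.1])
  rcases le_total θ (π - m) with h₁ | h₁
  · have := up_left ⟨le_rfl, by linarith⟩ ⟨hθ, h₁⟩ hθ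
    simp only [cos_zero, mul_zero, add_zero] at this
    linarith
  rcases le_total θ m with h₂ | h₂
  · exact down ⟨h₁, h₂⟩ ⟨by linarith, le_rfl⟩ h₂
  rcases le_total θ π with h₃ | h₃
  · exact up_right ⟨le_rfl, hmπ⟩ ⟨h₂, h₃⟩ h₂
  · calc cos m + sin m * m ≤ cos π + sin m * π := up_right ⟨le_rfl, hmπ⟩ ⟨hmπ, le_rfl⟩ hmπ
      _ ≤ cos θ + sin m * θ := by
        rw [cos_pi]
        gcongr
        exact neg_one_le_cos θ

lemma cos_mean_le {m x₁ x₂ p₁ p₂ : ℝ} (hm : π / 2 ≤ m) (hmπ : m ≤ π)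
    (hg : m * sin m + cos m ≤ 1) (hx₁ : 0 ≤ x₁) (hx₂ : 0 ≤ x₂) (hp₁ : 0 ≤ p₁) (hp₂ : 0 ≤ p₂)
    (hsum : p₁ + p₂ = 1) (hmean : p₁ * x₁ + p₂ * x₂ = m) :
    cos m ≤ p₁ * cos x₁ + p₂ * cos x₂ := by
  have h₁ := mul_le_mul_of_nonneg_left (cos_add_mul_sin_le hm hmπ hg hx₁) hp₁
  have h₂ := mul_le_mul_of_nonneg_left (cos_add_mul_sin_le hm hmπ hg hx₂) hp₂
  linear_combination h₁ + h₂ - (cos m + sin m * m) * hsum + sin m * hmean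

theorem stmt9_general (θc : ℝ)
    (hθc_mem : θc ∈ Set.Ioo 0 Real.pi)
    (hθc_eq : 1 - θc * Real.sin θc = Real.cos θc)
    (a E : ℝ) (ha : a ∈ Set.Ioo (-1 : ℝ) 1) (hE : 0 < E)
    (hEbound : E < Real.arccos (-a) / Real.sqrt (1 - a ^ 2))
    (ωs : ℝ) (hωs : ωs ∈ Set.Icc 0 (Real.sqrt (1 - a ^ 2)))
    (τ₁ τ₂ p₁ p₂ : ℝ) (hτ₁ : 0 ≤ τ₁) (hτ₂ : 0 ≤ τ₂) (hp₁ : 0 < p₁) (hp₂ : 0 < p₂)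
    (hsum : p₁ + p₂ = 1) (hmean : p₁ * τ₁ + p₂ * τ₂ = E)
    (hC : p₁ * Real.cos (ωs * τ₁) + p₂ * Real.cos (ωs * τ₂) = -a) :
    ωs * E < θc ∧ Real.cos (ωs * E) > -a := by
  obtain ⟨ha₁, ha₂⟩ := ha
  have hm₀ : 0 ≤ ωs * E := mul_nonneg hωs.1 hE.le
  have hωc : 0 < √(1 - a ^ 2) := sqrt_pos.2 (by nlinarith)
  have hm_lt : ωs * E < arccos (-a) :=
    calc ωs * E ≤ √(1 - a ^ 2) * E := mul_le_mul_of_nonneg_right hωs.2 hE.le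
      _ < arccos (-a) := by rwa [lt_div_iff₀ hωc, mul_comm] at hEbound
  have hmπ : ωs * E ≤ π := hm_lt.le.trans (arccos_le_pi _)
  have hcos : -a < cos (ωs * E) := by
    rw [← cos_arccos (x := -a) (by linarith) (by linarith)]
    exact cos_lt_cos_of_nonneg_of_le_pi hm₀ (arccos_le_pi _) hm_lt
  refine ⟨?_, hcos⟩
  by_contra! hθ
  have hθc : π / 2 ≤ θc := pi_div_two_le_of_mul_sin_add_cos_eq_one hθc_mem.1 (by linarith)
  have hg : ωs * E * sin (ωs * E) + cos (ωs * E) ≤ 1 := by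
    have := antitoneOn_mul_sin_add_cos ⟨hθc, hθc_mem.2.le⟩ ⟨hθc.trans hθ, hmπ⟩ hθ
    simp only at this
    linarith
  have := cos_mean_le (hθc.trans hθ) hmπ hg (mul_nonneg hωs.1 hτ₁) (mul_nonneg hωs.1 hτ₂)
    hp₁.le hp₂.le hsum (by rw [← hmean]; ring)
  linarith

/-- Paper Lemma 4.2. -/
theorem stmt9 (θc c : ℝ)
    (hθc_mem : θc ∈ Set.Ioo 0 Real.pi)
    (hθc_eq : 1 - θc * Real.sin θc = Real.cos θc)
    (hθc_uniq : ∀ θ ∈ Set.Ioo 0 Real.pi, 1 - θ * Real.sin θ = Real.cos θ → θ = θc)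
    (hc : c = Real.sin θc)
    (a E : ℝ) (ha : a ∈ Set.Ioo (-1 : ℝ) 1) (hE : 0 < E)
    (hEbound : E < Real.arccos (-a) / Real.sqrt (1 - a ^ 2))
    (ωs : ℝ) (hωs : ωs ∈ Set.Icc 0 (Real.sqrt (1 - a ^ 2)))
    (τ₁ τ₂ p₁ p₂ : ℝ) (hτ₁ : 0 ≤ τ₁) (hτ₂ : 0 ≤ τ₂) (hp₁ : 0 < p₁) (hp₂ : 0 < p₂)
    (hsum : p₁ + p₂ = 1) (hmean : p₁ * τ₁ + p₂ * τ₂ = E)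
    (hC : p₁ * Real.cos (ωs * τ₁) + p₂ * Real.cos (ωs * τ₂) = -a) :
    ωs * E < θc ∧ Real.cos (ωs * E) > -a :=
  stmt9_general θc hθc_mem hθc_eq a E ha hE hEbound ωs hωs τ₁ τ₂ p₁ p₂ hτ₁ hτ₂ hp₁ hp₂ hsum hmean hC
end

section
/- Let a ∈ (-1,1) and E > 0 with E < arccos(-a)/ω_c, where ω_c = √(1-a²). Suppose ω_s ∈ [0, ω_c], and suppose τ₁, τ₂ ≥ 0 and p₁, p₂ > 0 satisfy p₁ + p₂ = 1, p₁τ₁ + p₂τ₂ = E, and p₁cos(ω_s τ₁) + p₂cos(ω_s τ₂) = -a. Let (p*, τ₂*) be the unique pair with p* ∈ (0,1), 0 < ω_s τ₂* ≤ θ_c, p*·τ₂* = E, and (1-p*) + p*·cos(ω_s τ₂*) = -a. Then p₁sin(ω_s τ₁) + p₂sin(ω_s τ₂) ≤ p*·sin(ω_s τ₂*). -/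
open Real Set

/-!
With θᵢ = ω_s τᵢ and s = ω_s τ*, the claim is a linear programme in the weights: maximise
Σ pᵢ sin θᵢ subject to Σ pᵢ θᵢ = p* s and Σ pᵢ cos θᵢ = (1 - p*) + p* cos s. A dual certificate is
a line θ ↦ B θ through the origin lying above θ ↦ sin θ + D (1 - cos θ) on [0, ∞) and touching it
at s; averaging against the weights gives the bound. Up to a positive factor that curve is the
shifted sine θ ↦ sin m + sin (θ - m) with m = arctan D, and D can be chosen to make the line its
tangent at s exactly when cos s + s sin s > 1, i.e. when s < θ_c. At s = θ_c the certificate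
degenerates to 1 - cos θ ≤ θ sin θ_c, with equality only at 0 and θ_c, which pins every θᵢ to
{0, θ_c}.
-/

theorem StrictConcaveOn.lt_add_mul_sub_of_hasDerivAt {S : Set ℝ} {f : ℝ → ℝ} {f' x y : ℝ}
    (hf : StrictConcaveOn ℝ S f) (hx : x ∈ S) (hy : y ∈ S) (hyx : y ≠ x)
    (hd : HasDerivAt f f' x) : f y < f x + f' * (y - x) := by
  rcases hyx.lt_or_gt with h | h
  · have := hf.lt_slope_of_hasDerivAt hy hx h hd
    rw [slope_def_field, lt_div_iff₀ (sub_pos.2 h)] at this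
    linarith
  · have := hf.slope_lt_of_hasDerivAt hx hy h hd
    rw [slope_def_field, div_lt_iff₀ (sub_pos.2 h)] at this
    linarith

variable {m s θ θc : ℝ}

variable (m) in
lemma hasDerivAt_sin_add_sin_sub (x : ℝ) :
    HasDerivAt (fun θ => sin m + sin (θ - m)) (cos (x - m)) x := by
  simpa using ((hasDerivAt_id x).sub_const m).sin.const_add (sin m)

variable (m) in
lemma deriv_sin_add_sin_sub :
    deriv (fun θ => sin m + sin (θ - m)) = fun x => cos (x - m) :=
  funext fun x => (hasDerivAt_sin_add_sin_sub m x).deriv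

variable (m) in
lemma strictConcaveOn_sin_add_sin_sub :
    StrictConcaveOn ℝ (Icc m (m + π)) (fun θ => sin m + sin (θ - m)) := by
  refine StrictAntiOn.strictConcaveOn_of_deriv (convex_Icc _ _) (by fun_prop) ?_
  rw [deriv_sin_add_sin_sub, interior_Icc]
  intro x hx y hy hxy
  exact strictAntiOn_cos ⟨by linarith [hx.1], by linarith [hx.2]⟩
    ⟨by linarith [hy.1], by linarith [hy.2]⟩ (by linarith)

lemma strictConvexOn_sin_add_sin_sub (hmπ : m ≤ π) :
    StrictConvexOn ℝ (Icc 0 m) (fun θ => sin m + sin (θ - m)) := by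
  refine StrictMonoOn.strictConvexOn_of_deriv (convex_Icc _ _) (by fun_prop) ?_
  rw [deriv_sin_add_sin_sub, interior_Icc]
  intro x hx y hy hxy
  simp only [← cos_neg (x - m), ← cos_neg (y - m), neg_sub]
  exact strictAntiOn_cos ⟨by linarith [hy.2], by linarith [hy.1]⟩
    ⟨by linarith [hx.2], by linarith [hx.1]⟩ (by linarith)

lemma sin_add_sin_sub_lt_mul_cos (hm : 0 ≤ m) (hmπ : m ≤ π) (hms : m ≤ s)
    (hsm : s < m + π / 2) (htan : sin m + sin (s - m) = s * cos (s - m))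
    (hθ : 0 < θ) (hθs : θ ≠ s) : sin m + sin (θ - m) < θ * cos (s - m) := by
  have hπ := pi_pos
  have below_tangent : ∀ x ∈ Icc m (m + π), x ≠ s → sin m + sin (x - m) < x * cos (s - m) := by
    intro x hx hxs
    have := (strictConcaveOn_sin_add_sin_sub m).lt_add_mul_sub_of_hasDerivAt
      ⟨hms, by linarith⟩ hx hxs (hasDerivAt_sin_add_sin_sub m s)
    linarith
  have hslope_nonneg : 0 ≤ cos (s - m) := cos_nonneg_of_mem_Icc ⟨by linarith, by linarith⟩
  -- On [0, m] the curve is convex and vanishes at 0, so it stays below its chord to the point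
  -- (m, sin m), which lies below the line; beyond m + π/2 it never exceeds its peak value.
  rcases lt_or_ge θ m with hθm | hθm
  · have hm_le : sin m ≤ m * cos (s - m) := by
      rcases eq_or_ne m s with rfl | hms'
      · simpa using htan.le
      · simpa using (below_tangent m ⟨le_rfl, by linarith⟩ hms').le
    have hsecant := (strictConvexOn_sin_add_sin_sub hmπ).secant_strict_mono
      (left_mem_Icc.2 hm) ⟨hθ.le, hθm.le⟩ (right_mem_Icc.2 hm) hθ.ne' (by linarith) hθm
    simp only [zero_sub, sin_neg, add_neg_cancel, sub_zero, sub_self, sin_zero, add_zero] at hsecant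
    rw [div_lt_div_iff₀ hθ (by linarith)] at hsecant
    nlinarith [mul_le_mul_of_nonneg_left hm_le hθ.le]
  rcases le_or_gt θ (m + π / 2) with hθm' | hθm'
  · exact below_tangent θ ⟨hθm, by linarith⟩ hθs
  · have hpeak := below_tangent (m + π / 2) ⟨by linarith, by linarith⟩ (by linarith)
    simp only [add_sub_cancel_left, sin_pi_div_two] at hpeak
    nlinarith [sin_le_one (θ - m)]

lemma sin_add_sin_sub_le_mul_cos (hm : 0 ≤ m) (hmπ : m ≤ π) (hms : m ≤ s)
    (hsm : s < m + π / 2) (htan : sin m + sin (s - m) = s * cos (s - m)) (hθ : 0 ≤ θ) :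
    sin m + sin (θ - m) ≤ θ * cos (s - m) := by
  rcases hθ.eq_or_lt with rfl | hθ
  · simp
  rcases eq_or_ne θ s with rfl | hθs
  · exact htan.le
  exact (sin_add_sin_sub_lt_mul_cos hm hmπ hms hsm htan hθ hθs).le

lemma hasDerivAt_cos_add_mul_sin (x : ℝ) :
    HasDerivAt (fun x => cos x + x * sin x) (x * cos x) x :=
  ((hasDerivAt_cos x).add ((hasDerivAt_id' x).mul (hasDerivAt_sin x))).congr_deriv (by ring)

lemma strictMonoOn_cos_add_mul_sin : StrictMonoOn (fun x => cos x + x * sin x) (Icc 0 (π / 2)) := by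
  refine strictMonoOn_of_deriv_pos (convex_Icc _ _) (by fun_prop) fun x hx => ?_
  rw [interior_Icc] at hx
  rw [(hasDerivAt_cos_add_mul_sin x).deriv]
  exact mul_pos hx.1 (cos_pos_of_mem_Ioo ⟨by linarith [pi_pos, hx.1], hx.2⟩)

lemma strictAntiOn_cos_add_mul_sin : StrictAntiOn (fun x => cos x + x * sin x) (Icc (π / 2) π) := by
  refine strictAntiOn_of_deriv_neg (convex_Icc _ _) (by fun_prop) fun x hx => ?_
  rw [interior_Icc] at hx
  rw [(hasDerivAt_cos_add_mul_sin x).deriv]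
  exact mul_neg_of_pos_of_neg (by linarith [pi_pos, hx.1])
    (cos_neg_of_pi_div_two_lt_of_lt hx.1 (by linarith [hx.2, pi_pos]))

lemma pi_div_two_lt_of_cos_add_mul_sin_eq_one (hθc : θc ∈ Ioo 0 π)
    (heq : cos θc + θc * sin θc = 1) : π / 2 < θc := by
  by_contra! h
  have := strictMonoOn_cos_add_mul_sin (left_mem_Icc.2 pi_div_two_pos.le) ⟨hθc.1.le, h⟩ hθc.1
  simp only [cos_zero, zero_mul, add_zero] at this
  linarith

lemma one_lt_cos_add_mul_sin_of_lt (hθc : θc ∈ Ioo 0 π) (heq : cos θc + θc * sin θc = 1)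
    (hs : 0 < s) (hsθc : s < θc) : 1 < cos s + s * sin s := by
  have hθc_gt := pi_div_two_lt_of_cos_add_mul_sin_eq_one hθc heq
  rcases le_or_gt s (π / 2) with hs' | hs'
  · simpa using strictMonoOn_cos_add_mul_sin (left_mem_Icc.2 pi_div_two_pos.le) ⟨hs.le, hs'⟩ hs
  · have := strictAntiOn_cos_add_mul_sin ⟨hs'.le, by linarith [hθc.2]⟩ ⟨hθc_gt.le, hθc.2.le⟩ hsθc
    linarith

lemma mul_cos_lt_sin_s11 (hs : 0 < s) (hsπ : s < π) : s * cos s < sin s := by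
  rcases lt_or_ge s (π / 2) with h | h
  · have hcos : 0 < cos s := cos_pos_of_mem_Ioo ⟨by linarith, h⟩
    have := lt_tan hs h
    rwa [tan_eq_sin_div_cos, lt_div_iff₀ hcos] at this
  · nlinarith [cos_nonpos_of_pi_div_two_le_of_le h (by linarith), sin_pos_of_pos_of_lt_pi hs hsπ]

lemma one_sub_cos_lt_mul_sin (hθc : θc ∈ Ioo 0 π) (heq : cos θc + θc * sin θc = 1)
    (hθ : 0 < θ) (hθθc : θ ≠ θc) : 1 - cos θ < θ * sin θc := by
  have hθc_gt := pi_div_two_lt_of_cos_add_mul_sin_eq_one hθc heq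
  have htan : sin (π / 2) + sin (θc - π / 2) = θc * cos (θc - π / 2) := by
    rw [sin_pi_div_two, sin_sub_pi_div_two, cos_sub_pi_div_two]
    linarith
  have := sin_add_sin_sub_lt_mul_cos pi_div_two_pos.le (by linarith [pi_pos]) hθc_gt.le
    (by linarith [hθc.2]) htan hθ hθθc
  rwa [sin_pi_div_two, sin_sub_pi_div_two, cos_sub_pi_div_two, ← sub_eq_add_neg] at this

lemma sqrt_mul_sin_sub_arctan (D θ : ℝ) :
    √(1 + D ^ 2) * sin (θ - arctan D) = sin θ - D * cos θ := by
  rw [sin_sub, sin_arctan, cos_arctan]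
  field_simp

lemma sqrt_mul_cos_sub_arctan (D θ : ℝ) :
    √(1 + D ^ 2) * cos (θ - arctan D) = cos θ + D * sin θ := by
  rw [cos_sub, sin_arctan, cos_arctan]
  field_simp

lemma sin_add_mul_one_sub_cos_eq (D θ : ℝ) :
    sin θ + D * (1 - cos θ) = √(1 + D ^ 2) * (sin (arctan D) + sin (θ - arctan D)) := by
  rw [mul_add, sqrt_mul_sin_sub_arctan, sin_arctan]
  field_simp
  ring

lemma exists_sin_add_mul_one_sub_cos_le_mul (hs : 0 < s) (hsπ : s < π)
    (hh : 1 < cos s + s * sin s) :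
    ∃ B D : ℝ, (∀ θ, 0 ≤ θ → sin θ + D * (1 - cos θ) ≤ B * θ) ∧
      sin s + D * (1 - cos s) = B * s := by
  set h := cos s + s * sin s - 1
  have hh0 : 0 < h := by linarith
  -- the value of D for which the tangent to the curve at s passes through the origin
  set D := (sin s - s * cos s) / h
  have hD : D * h = sin s - s * cos s := div_mul_cancel₀ _ hh0.ne'
  set m := arctan D
  set R := √(1 + D ^ 2)
  have hR : 0 < R := sqrt_pos.2 (by positivity)
  have hm0 : 0 ≤ m :=
    arctan_nonneg.2 (div_nonneg (sub_nonneg.2 (mul_cos_lt_sin_s11 hs hsπ).le) hh0.le)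
  have hmπ : m < π / 2 := arctan_lt_pi_div_two D
  have hsin_sm : R * sin (s - m) * h = s - sin s := by
    rw [sqrt_mul_sin_sub_arctan]
    linear_combination (-cos s) * hD + s * sin_sq_add_cos_sq s
  have hcos_sm : R * cos (s - m) * h = 1 - cos s := by
    rw [sqrt_mul_cos_sub_arctan]
    linear_combination sin s * hD + sin_sq_add_cos_sq s
  have hms : m ≤ s := by
    by_contra! hsm
    have := sin_neg_of_neg_of_neg_pi_lt (sub_neg.2 hsm) (by linarith)
    nlinarith [sin_le hs.le, mul_pos hR hh0]
  have hsm : s < m + π / 2 := by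
    by_contra! hsm
    have := cos_nonpos_of_pi_div_two_le_of_le (x := s - m) (by linarith) (by linarith)
    nlinarith [cos_lt_cos_of_nonneg_of_le_pi le_rfl hsπ.le hs, cos_zero, mul_pos hR hh0]
  have htouch : sin s + D * (1 - cos s) = R * cos (s - m) * s := by
    refine mul_right_cancel₀ hh0.ne' ?_
    linear_combination (1 - cos s) * hD - s * hcos_sm + s * sin_sq_add_cos_sq s
  have htan : sin m + sin (s - m) = s * cos (s - m) := by
    refine mul_left_cancel₀ hR.ne' ?_
    rw [← sin_add_mul_one_sub_cos_eq]
    linear_combination htouch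
  refine ⟨R * cos (s - m), D, fun θ hθ => ?_, htouch⟩
  rw [sin_add_mul_one_sub_cos_eq, mul_assoc, mul_comm _ θ]
  exact mul_le_mul_of_nonneg_left
    (sin_add_sin_sub_le_mul_cos hm0 (by linarith) hms hsm htan hθ) hR.le

section TwoPointMeasures

variable {p₁ p₂ θ₁ θ₂ q : ℝ}

lemma weighted_sin_le_of_supporting_line {B D : ℝ}
    (hline : ∀ θ, 0 ≤ θ → sin θ + D * (1 - cos θ) ≤ B * θ)
    (htouch : sin s + D * (1 - cos s) = B * s) (hp₁ : 0 ≤ p₁) (hp₂ : 0 ≤ p₂)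
    (hθ₁ : 0 ≤ θ₁) (hθ₂ : 0 ≤ θ₂) (hsum : p₁ + p₂ = 1) (hmean : p₁ * θ₁ + p₂ * θ₂ = q * s)
    (hcos : p₁ * cos θ₁ + p₂ * cos θ₂ = (1 - q) + q * cos s) :
    p₁ * sin θ₁ + p₂ * sin θ₂ ≤ q * sin s := by
  have h₁ := mul_le_mul_of_nonneg_left (hline θ₁ hθ₁) hp₁
  have h₂ := mul_le_mul_of_nonneg_left (hline θ₂ hθ₂) hp₂
  linear_combination h₁ + h₂ + B * hmean + D * hcos - D * hsum - q * htouch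

lemma weighted_sin_eq_of_one_sub_cos_lt
    (hline : ∀ θ, 0 < θ → θ ≠ θc → 1 - cos θ < θ * sin θc)
    (htouch : 1 - cos θc = θc * sin θc) (hθc : 0 < θc) (hp₁ : 0 < p₁) (hp₂ : 0 < p₂)
    (hθ₁ : 0 ≤ θ₁) (hθ₂ : 0 ≤ θ₂) (hsum : p₁ + p₂ = 1) (hmean : p₁ * θ₁ + p₂ * θ₂ = q * θc)
    (hcos : p₁ * cos θ₁ + p₂ * cos θ₂ = (1 - q) + q * cos θc) :
    p₁ * sin θ₁ + p₂ * sin θ₂ = q * sin θc := by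
  have hgap : ∀ θ, 0 ≤ θ → 0 ≤ θ * sin θc - (1 - cos θ) ∧
      (θ * sin θc - (1 - cos θ) = 0 → θc * sin θ = θ * sin θc) := by
    intro θ hθ
    rcases hθ.eq_or_lt with rfl | hθ
    · simp
    rcases eq_or_ne θ θc with rfl | hθθc
    · exact ⟨by linarith, fun _ => rfl⟩
    have := hline θ hθ hθθc
    exact ⟨by linarith, fun h => by linarith⟩
  obtain ⟨hg₁, hz₁⟩ := hgap θ₁ hθ₁
  obtain ⟨hg₂, hz₂⟩ := hgap θ₂ hθ₂
  have hzero : p₁ * (θ₁ * sin θc - (1 - cos θ₁)) + p₂ * (θ₂ * sin θc - (1 - cos θ₂)) = 0 := by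
    linear_combination sin θc * hmean + hcos - hsum - q * htouch
  have h₁ := hz₁ (by nlinarith [mul_nonneg hp₁.le hg₁, mul_nonneg hp₂.le hg₂])
  have h₂ := hz₂ (by nlinarith [mul_nonneg hp₁.le hg₁, mul_nonneg hp₂.le hg₂])
  refine mul_left_cancel₀ hθc.ne' ?_
  linear_combination p₁ * h₁ + p₂ * h₂ + sin θc * hmean

end TwoPointMeasures

theorem stmt11_general (θc : ℝ)
    (hθc_mem : θc ∈ Set.Ioo 0 Real.pi)
    (hθc_eq : 1 - θc * Real.sin θc = Real.cos θc)
    (a E : ℝ)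
    (ωs : ℝ) (hωs : ωs ∈ Set.Icc 0 (Real.sqrt (1 - a ^ 2)))
    (τ₁ τ₂ p₁ p₂ : ℝ) (hτ₁ : 0 ≤ τ₁) (hτ₂ : 0 ≤ τ₂) (hp₁ : 0 < p₁) (hp₂ : 0 < p₂)
    (hsum : p₁ + p₂ = 1) (hmean : p₁ * τ₁ + p₂ * τ₂ = E)
    (hC : p₁ * Real.cos (ωs * τ₁) + p₂ * Real.cos (ωs * τ₂) = -a)
    (pstar τstar : ℝ)
    (hτstar : 0 < ωs * τstar) (hτstar' : ωs * τstar ≤ θc)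
    (hmeanstar : pstar * τstar = E)
    (hCstar : (1 - pstar) + pstar * Real.cos (ωs * τstar) = -a) :
    p₁ * Real.sin (ωs * τ₁) + p₂ * Real.sin (ωs * τ₂) ≤ pstar * Real.sin (ωs * τstar) := by
  have hθc : cos θc + θc * sin θc = 1 := by linarith
  have hθ₁ : 0 ≤ ωs * τ₁ := mul_nonneg hωs.1 hτ₁
  have hθ₂ : 0 ≤ ωs * τ₂ := mul_nonneg hωs.1 hτ₂
  have hmean' : p₁ * (ωs * τ₁) + p₂ * (ωs * τ₂) = pstar * (ωs * τstar) := by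
    linear_combination ωs * hmean - ωs * hmeanstar
  have hcos := hC.trans hCstar.symm
  rcases hτstar'.lt_or_eq with hlt | heq
  · obtain ⟨B, D, hline, htouch⟩ := exists_sin_add_mul_one_sub_cos_le_mul hτstar
      (hlt.trans hθc_mem.2) (one_lt_cos_add_mul_sin_of_lt hθc_mem hθc hτstar hlt)
    exact weighted_sin_le_of_supporting_line hline htouch hp₁.le hp₂.le hθ₁ hθ₂ hsum hmean' hcos
  · rw [heq] at hmean' hcos ⊢
    exact (weighted_sin_eq_of_one_sub_cos_lt (fun θ => one_sub_cos_lt_mul_sin hθc_mem hθc)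
      (by linarith) hθc_mem.1 hp₁ hp₂ hθ₁ hθ₂ hsum hmean' hcos).le

/-- Paper Lemma 4.4: the extremal density `f*` maximizes `S₂(ω_s)`. -/
theorem stmt11 (θc c : ℝ)
    (hθc_mem : θc ∈ Set.Ioo 0 Real.pi)
    (hθc_eq : 1 - θc * Real.sin θc = Real.cos θc)
    (hθc_uniq : ∀ θ ∈ Set.Ioo 0 Real.pi, 1 - θ * Real.sin θ = Real.cos θ → θ = θc)
    (hc : c = Real.sin θc)
    (a E : ℝ) (ha : a ∈ Set.Ioo (-1 : ℝ) 1) (hE : 0 < E)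
    (hEbound : E < Real.arccos (-a) / Real.sqrt (1 - a ^ 2))
    (ωs : ℝ) (hωs : ωs ∈ Set.Icc 0 (Real.sqrt (1 - a ^ 2)))
    (τ₁ τ₂ p₁ p₂ : ℝ) (hτ₁ : 0 ≤ τ₁) (hτ₂ : 0 ≤ τ₂) (hp₁ : 0 < p₁) (hp₂ : 0 < p₂)
    (hsum : p₁ + p₂ = 1) (hmean : p₁ * τ₁ + p₂ * τ₂ = E)
    (hC : p₁ * Real.cos (ωs * τ₁) + p₂ * Real.cos (ωs * τ₂) = -a)
    (pstar τstar : ℝ) (hpstar : pstar ∈ Set.Ioo (0 : ℝ) 1)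
    (hτstar : 0 < ωs * τstar) (hτstar' : ωs * τstar ≤ θc)
    (hmeanstar : pstar * τstar = E)
    (hCstar : (1 - pstar) + pstar * Real.cos (ωs * τstar) = -a) :
    p₁ * Real.sin (ωs * τ₁) + p₂ * Real.sin (ωs * τ₂) ≤ pstar * Real.sin (ωs * τstar) :=
  stmt11_general θc hθc_mem hθc_eq a E ωs hωs τ₁ τ₂ p₁ p₂ hτ₁ hτ₂ hp₁ hp₂ hsum hmean hC pstar τstar
    hτstar hτstar' hmeanstar hCstar
end

section
/- Let a ∈ (-1,1), p ∈ (0,1], τ* > 0 and ω_s > 0 with 0 < ω_s τ* ≤ π. Assume p·τ* < arccos(-a)/√(1-a²) and (1-p) + p·cos(ω_s τ*) = -a. Then p·sin(ω_s τ*) < ω_s. -/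
/-!
With `θ = ω_s τ*` and `θ₀ = arccos (-a)`, the constraint `C*(ω_s) = -a` forces `cos θ ≤ -a`,
hence `θ₀ ≤ θ ≤ π`. Since `sin` is concave on `[0, π]` and vanishes at `0`, `sin x / x`
decreases there, so `p sin θ ≤ ω_s (p τ*) sin θ₀ / θ₀`, and the mean bound
`p τ* < θ₀ / sin θ₀ = arccos (-a) / √(1 - a²)` makes the right-hand side smaller than `ω_s`.
-/

open Real Set

theorem Real.antitoneOn_sin_div_self : AntitoneOn (fun x => sin x / x) (Ioc 0 π) := by
  intro x hx y hy hxy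
  rcases hxy.eq_or_lt with rfl | hlt
  · rfl
  have h := strictConcaveOn_sin_Icc.secant_strict_mono (a := 0) ⟨le_rfl, pi_pos.le⟩
    (Ioc_subset_Icc_self hx) (Ioc_subset_Icc_self hy) hx.1.ne' hy.1.ne' hlt
  simpa only [sin_zero, sub_zero] using h.le

theorem stmt12_general (a p τstar ωs : ℝ)
    (ha : a ∈ Set.Ioo (-1 : ℝ) 1) (hp : p ∈ Set.Ioc (0 : ℝ) 1)
    (hω : 0 < ωs)
    (hωτ : 0 < ωs * τstar) (hωτ' : ωs * τstar ≤ Real.pi)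
    (hE : p * τstar < Real.arccos (-a) / Real.sqrt (1 - a ^ 2))
    (hC : (1 - p) + p * Real.cos (ωs * τstar) = -a) :
    p * Real.sin (ωs * τstar) < ωs := by
  set θ := ωs * τstar
  set θ₀ := arccos (-a)
  have hτ : 0 < τstar := pos_of_mul_pos_right hωτ hω.le
  have hcos : cos θ ≤ -a := by nlinarith [cos_le_one θ, hp.2]
  have hθ₀θ : θ₀ ≤ θ := (arccos_le_arccos hcos).trans (arccos_cos hωτ.le hωτ').le
  have hθ₀ : 0 < θ₀ := arccos_pos.2 (by linarith [ha.1])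
  have hsinθ₀ : sin θ₀ = √(1 - a ^ 2) := by rw [sin_arccos, neg_sq]
  have hsqrt : 0 < √(1 - a ^ 2) := sqrt_pos.2 (by nlinarith [ha.1, ha.2])
  have hmean : p * τstar * (sin θ₀ / θ₀) < 1 := by
    rw [hsinθ₀, mul_div_assoc', div_lt_one hθ₀, ← lt_div_iff₀ hsqrt]
    exact hE
  have hdecr : sin θ / θ ≤ sin θ₀ / θ₀ :=
    antitoneOn_sin_div_self ⟨hθ₀, hθ₀θ.trans hωτ'⟩ ⟨hωτ, hωτ'⟩ hθ₀θ
  calc p * sin θ = ωs * (p * τstar) * (sin θ / θ) := by field_simp; ring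
    _ ≤ ωs * (p * τstar) * (sin θ₀ / θ₀) := by gcongr; exact mul_nonneg hω.le (mul_nonneg hp.1.le hτ.le)
    _ < ωs * 1 := by rw [mul_assoc]; gcongr
    _ = ωs := mul_one ωs

/-- Paper, proof of Theorem 4.5 (case n = 2): the key estimate `S*(ω_s) < ω_s`. -/
theorem stmt12 (a p τstar ωs : ℝ)
    (ha : a ∈ Set.Ioo (-1 : ℝ) 1) (hp : p ∈ Set.Ioc (0 : ℝ) 1)
    (hτ : 0 < τstar) (hω : 0 < ωs)
    (hωτ : 0 < ωs * τstar) (hωτ' : ωs * τstar ≤ Real.pi)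
    (hE : p * τstar < Real.arccos (-a) / Real.sqrt (1 - a ^ 2))
    (hC : (1 - p) + p * Real.cos (ωs * τstar) = -a) :
    p * Real.sin (ωs * τstar) < ωs :=
  stmt12_general a p τstar ωs ha hp hω hωτ hωτ' hE hC
end

section
/- For all real numbers a, A with -1 < a ≤ A < 1, one has arccos(-a)/√(1-a²) ≤ arccos(-A)/√(1-A²); that is, the function x ↦ arccos(-x)/√(1-x²) is monotone nondecreasing on (-1,1). -/
/-! Substituting `θ = arccos (-x)`, which increases from `0` to `π` as `x` runs over `(-1, 1)`,
turns `√(1 - x²)` into `sin θ`, so the function is `θ / sin θ`. Since `sin` is concave on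
`[0, π]` and vanishes at `0`, its secant slope `sin θ / θ` through the origin decreases. -/

open Real Set

theorem Real.strictAntiOn_sin_div_self : StrictAntiOn (fun x => sin x / x) (Ioc 0 π) := by
  intro x hx y hy hxy
  have hmem : ∀ {z}, z ∈ Ioc 0 π → z ∈ Icc 0 π := fun hz => Ioc_subset_Icc_self hz
  simpa using strictConcaveOn_sin_Icc.secant_strict_mono (left_mem_Icc.2 pi_pos.le)
    (hmem hx) (hmem hy) hx.1.ne' hy.1.ne' hxy

theorem Real.strictMonoOn_self_div_sin : StrictMonoOn (fun x => x / sin x) (Ioo 0 π) := by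
  intro x hx y hy hxy
  have hsin : ∀ {z}, z ∈ Ioo 0 π → 0 < sin z / z := fun hz =>
    div_pos (sin_pos_of_pos_of_lt_pi hz.1 hz.2) hz.1
  have hanti := strictAntiOn_sin_div_self (Ioo_subset_Ioc_self hx) (Ioo_subset_Ioc_self hy) hxy
  simpa only [inv_div] using (inv_lt_inv₀ (hsin hx) (hsin hy)).2 hanti

theorem Real.strictMonoOn_arccos_neg : StrictMonoOn (fun x => arccos (-x)) (Icc (-1) 1) :=
  fun x hx y hy hxy => strictAntiOn_arccos (neg_mem_Icc_iff.2 (by rwa [neg_neg]))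
    (neg_mem_Icc_iff.2 (by rwa [neg_neg])) (neg_lt_neg hxy)

theorem Real.arccos_neg_div_sqrt_eq (x : ℝ) :
    arccos (-x) / √(1 - x ^ 2) = arccos (-x) / sin (arccos (-x)) := by
  rw [sin_arccos, neg_sq]

theorem Real.strictMonoOn_arccos_neg_div_sqrt :
    StrictMonoOn (fun x => arccos (-x) / √(1 - x ^ 2)) (Ioo (-1) 1) := by
  have hmaps : MapsTo (fun x => arccos (-x)) (Ioo (-1) 1) (Ioo 0 π) := fun x hx =>
    ⟨arccos_pos.2 (by linarith [hx.1]), arccos_lt_pi.2 (by linarith [hx.2])⟩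
  simpa only [arccos_neg_div_sqrt_eq, Function.comp_def] using
    strictMonoOn_self_div_sin.comp (strictMonoOn_arccos_neg.mono Ioo_subset_Icc_self) hmaps

/-- Monotonicity of `x ↦ arccos(-x)/√(1-x²)` on `(-1,1)`
(used in the proof of the paper's Theorem 4.5). -/
theorem stmt13 (a A : ℝ) (ha : -1 < a) (haA : a ≤ A) (hA : A < 1) :
    Real.arccos (-a) / Real.sqrt (1 - a ^ 2) ≤
      Real.arccos (-A) / Real.sqrt (1 - A ^ 2) :=
  strictMonoOn_arccos_neg_div_sqrt.monotoneOn ⟨ha, haA.trans_lt hA⟩ ⟨ha.trans_le haA, hA⟩ haA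
end

section
/- Let θ_c ∈ (0,π) be the unique solution of 1 - θ·sin(θ) = cos(θ) on (0,π) and c = sin(θ_c). Then the function g : [0,π] → [-1,1] defined by g(x) = 1 - c·x for 0 ≤ x < θ_c and g(x) = cos(x) for θ_c ≤ x ≤ π is convex on [0,π], and g(x) ≤ cos(x) for all x ∈ [0,π]. -/
/-!
The glue equation `1 - θc sin θc = cos θc` says exactly that the line `1 - c x` is the tangent
to `cos` at `θc`, and it forces `θc > π/2`. Hence `g` is differentiable with derivative
`-sin (max x θc)`, which is monotone because `sin` decreases on `[π/2, π]`; so `g` is convex.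
For the bound, `cos` lies above its tangent on `[π/2, θc]` by the mean value theorem; at `π/2`
this gives `c ≥ 2/π`, and on `[0, π/2]` Jordan's inequality `cos x ≥ 1 - 2x/π` finishes.
-/

open Real Set

theorem Real.antitoneOn_sin_Icc : AntitoneOn sin (Icc (π / 2) π) := by
  intro x hx y hy hxy
  rw [← sin_pi_sub x, ← sin_pi_sub y]
  exact sin_le_sin_of_le_of_le_pi_div_two (by linarith [hy.2, pi_pos]) (by linarith [hx.1])
    (by linarith)

theorem hasDerivAt_ite_lt {f g f' g' : ℝ → ℝ} {a : ℝ} (hf : ∀ x, HasDerivAt f (f' x) x)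
    (hg : ∀ x, HasDerivAt g (g' x) x) (hfga : f a = g a) (hfga' : f' a = g' a) (x : ℝ) :
    HasDerivAt (fun y => if y < a then f y else g y) (if x < a then f' x else g' x) x := by
  rcases lt_trichotomy x a with hxa | rfl | hax
  · rw [if_pos hxa]
    refine (hf x).congr_of_eventuallyEq ?_
    filter_upwards [Iio_mem_nhds hxa] with y hy
    rw [if_pos (mem_Iio.1 hy)]
  · rw [if_neg (lt_irrefl x), ← hasDerivWithinAt_univ, ← Iic_union_Ici]
    refine HasDerivWithinAt.union ?_ ?_
    · rw [← hfga']
      refine (hf x).hasDerivWithinAt.congr (fun y hy => ?_) (by rw [if_neg (lt_irrefl x), hfga])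
      rcases (mem_Iic.1 hy).lt_or_eq with hyx | rfl
      · rw [if_pos hyx]
      · rw [if_neg (lt_irrefl _), hfga]
    · exact (hg x).hasDerivWithinAt.congr (fun y hy => by rw [if_neg (not_lt.2 hy)])
        (by rw [if_neg (lt_irrefl x)])
  · rw [if_neg hax.not_gt]
    refine (hg x).congr_of_eventuallyEq ?_
    filter_upwards [Ioi_mem_nhds hax] with y hy
    rw [if_neg (not_lt.2 (le_of_lt hy))]

theorem pi_div_two_lt_of_one_sub_mul_sin_eq_cos {θ : ℝ} (hθ : 0 < θ)
    (heq : 1 - θ * sin θ = cos θ) : π / 2 < θ := by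
  by_contra! hle
  have hsin : 2 / π * θ ≤ sin θ := mul_le_sin hθ.le hle
  have hπ : 1 / 2 < 2 / π := by
    rw [lt_div_iff₀ pi_pos]
    linarith [pi_lt_four]
  linarith [one_sub_sq_div_two_le_cos (x := θ), mul_le_mul_of_nonneg_left hsin hθ.le,
    mul_lt_mul_of_pos_right hπ (pow_pos hθ 2)]

theorem one_sub_sin_mul_le_cos_of_mem_Icc {θ x : ℝ} (hθ : θ ≤ π)
    (heq : 1 - θ * sin θ = cos θ) (hx : x ∈ Icc (π / 2) θ) : 1 - sin θ * x ≤ cos x := by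
  have hslope : ∀ y ∈ interior (Icc x θ), deriv cos y ≤ -sin θ := by
    intro y hy
    rw [interior_Icc] at hy
    rw [Real.deriv_cos, neg_le_neg_iff]
    exact antitoneOn_sin_Icc ⟨hx.1.trans hy.1.le, hy.2.le.trans hθ⟩
      ⟨hx.1.trans hx.2, hθ⟩ hy.2.le
  have := (convex_Icc x θ).image_sub_le_mul_sub_of_deriv_le continuousOn_cos
    differentiable_cos.differentiableOn hslope x (left_mem_Icc.2 hx.2) θ (right_mem_Icc.2 hx.2)
    hx.2
  linarith

theorem one_sub_sin_mul_le_cos {θ x : ℝ} (hθ : θ ∈ Icc (π / 2) π)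
    (heq : 1 - θ * sin θ = cos θ) (hx : x ∈ Icc 0 θ) : 1 - sin θ * x ≤ cos x := by
  rcases le_total (π / 2) x with hx2 | hx2
  · exact one_sub_sin_mul_le_cos_of_mem_Icc hθ.2 heq ⟨hx2, hx.2⟩
  · have hsin : 2 / π ≤ sin θ := by
      have := one_sub_sin_mul_le_cos_of_mem_Icc hθ.2 heq ⟨le_rfl, hθ.1⟩
      rw [cos_pi_div_two] at this
      rw [div_le_iff₀ pi_pos]
      linarith
    linarith [Real.one_sub_mul_le_cos hx.1 hx2, mul_le_mul_of_nonneg_right hsin hx.1]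

theorem convexOn_ite_one_sub_sin_mul_cos {θ : ℝ} (hθ : θ ∈ Icc (π / 2) π)
    (heq : 1 - θ * sin θ = cos θ) :
    ConvexOn ℝ (Icc 0 π) (fun x => if x < θ then 1 - sin θ * x else cos x) := by
  have hderiv : ∀ x, HasDerivAt (fun x => if x < θ then 1 - sin θ * x else cos x)
      (-sin (max x θ)) x := by
    intro x
    convert hasDerivAt_ite_lt (f' := fun _ => -sin θ)
      (fun y => by simpa using ((hasDerivAt_id y).const_mul (sin θ)).const_sub 1)
      hasDerivAt_cos (by linarith) rfl x using 1
    split_ifs with hxθ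
    · rw [max_eq_right hxθ.le]
    · rw [max_eq_left (not_lt.1 hxθ)]
  have hdiff : Differentiable ℝ (fun x => if x < θ then 1 - sin θ * x else cos x) :=
    fun x => (hderiv x).differentiableAt
  refine MonotoneOn.convexOn_of_deriv (convex_Icc 0 π) hdiff.continuous.continuousOn
    hdiff.differentiableOn ?_
  rw [interior_Icc, funext fun x => (hderiv x).deriv]
  intro x hx y hy hxy
  exact neg_le_neg (antitoneOn_sin_Icc ⟨hθ.1.trans (le_max_right _ _), max_le hx.2.le hθ.2⟩
    ⟨hθ.1.trans (le_max_right _ _), max_le hy.2.le hθ.2⟩ (max_le_max_right θ hxy))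

theorem stmt16_general (θc c : ℝ)
    (hθc_mem : θc ∈ Set.Ioo 0 Real.pi)
    (hθc_eq : 1 - θc * Real.sin θc = Real.cos θc)
    (hc : c = Real.sin θc) :
    ConvexOn ℝ (Set.Icc 0 Real.pi)
      (fun x => if x < θc then 1 - c * x else Real.cos x) ∧
    ∀ x ∈ Set.Icc (0 : ℝ) Real.pi,
      (if x < θc then 1 - c * x else Real.cos x) ≤ Real.cos x := by
  subst hc
  have hθc : θc ∈ Icc (π / 2) π :=
    ⟨(pi_div_two_lt_of_one_sub_mul_sin_eq_cos hθc_mem.1 hθc_eq).le, hθc_mem.2.le⟩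
  refine ⟨convexOn_ite_one_sub_sin_mul_cos hθc hθc_eq, fun x hx => ?_⟩
  split_ifs with hxθ
  · exact one_sub_sin_mul_le_cos hθc hθc_eq ⟨hx.1, hxθ.le⟩
  · exact le_rfl

/-- Paper Definition 4.1: the piecewise function `g` is convex on `[0, π]`
and bounded above by `cos`. -/
theorem stmt16 (θc c : ℝ)
    (hθc_mem : θc ∈ Set.Ioo 0 Real.pi)
    (hθc_eq : 1 - θc * Real.sin θc = Real.cos θc)
    (hθc_uniq : ∀ θ ∈ Set.Ioo 0 Real.pi, 1 - θ * Real.sin θ = Real.cos θ → θ = θc)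
    (hc : c = Real.sin θc) :
    ConvexOn ℝ (Set.Icc 0 Real.pi)
      (fun x => if x < θc then 1 - c * x else Real.cos x) ∧
    ∀ x ∈ Set.Icc (0 : ℝ) Real.pi,
      (if x < θc then 1 - c * x else Real.cos x) ≤ Real.cos x :=
  stmt16_general θc c hθc_mem hθc_eq hc
end

section
/- Let α > 0, h > 1, k₀ > α. Let q₁, q₂, q₃ be positive integers, β₁, β₂, β₃ > 0, and p₁, p₂, p₃ ≥ 0 with p₁ + p₂ + p₃ = 1. Let f_p(τ) = Σ_{i=1}^3 p_i · (β_i^{q_i}/Γ(q_i)) τ^{q_i - 1} e^{-β_i τ} be the mixture of Gamma densities, with mean E_p = Σ_{i=1}^3 p_i q_i/β_i. If E_p < k₀π/(2αh(k₀-α)), then every complex root λ of the characteristic equation λ + (αh(k₀-α)/k₀) ∫₀^∞ e^{-λτ} f_p(τ) dτ = 0 has negative real part. -/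
open MeasureTheory Set Real

/-!
Suppose `z = x + iy` is a root with `x ≥ 0`, and put `g τ = exp (-x τ) f_p τ ≥ 0`. The real and
imaginary parts of the characteristic equation read `b ∫ g cos (|y| τ) = -x` and
`b ∫ g sin (|y| τ) = |y|`. Integrating the elementary inequality `π/2 · sin u ≤ u + cos u`
(`u ≥ 0`, sharp at `u = π/2`) against `g` gives `π/2 · |y| + x ≤ b E_p |y|`, and since
`b E_p < π/2` this forces `x = y = 0`; but `z = 0` is not a root because `∫ f_p = 1`.
-/

theorem antitoneOn_add_cos_sub_pi_div_two_mul_sin :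
    AntitoneOn (fun u : ℝ => u + cos u - π / 2 * sin u) (Icc 0 (π / 2)) := by
  have hderiv (u : ℝ) : HasDerivAt (fun u : ℝ => u + cos u - π / 2 * sin u)
      (1 - sin u - π / 2 * cos u) u := by
    exact (((hasDerivAt_id u).add (hasDerivAt_cos u)).sub
      ((hasDerivAt_sin u).const_mul (π / 2))).congr_deriv (by ring)
  refine antitoneOn_of_deriv_nonpos (convex_Icc _ _) (by fun_prop)
    (fun u _ => (hderiv u).differentiableAt.differentiableWithinAt) fun u hu => ?_
  rw [interior_Icc] at hu
  rw [(hderiv u).deriv]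
  have hsin := mul_le_sin hu.1.le hu.2.le
  have hcos := one_sub_mul_le_cos hu.1.le hu.2.le
  have hπ : 2 / π ≤ 1 := (div_le_one pi_pos).2 two_le_pi
  have : π / 2 * (2 / π) = 1 := by field_simp
  nlinarith [pi_pos, hu.2]

theorem pi_div_two_mul_sin_le_add_cos {u : ℝ} (hu : 0 ≤ u) : π / 2 * sin u ≤ u + cos u := by
  rcases le_or_gt (π / 2) u with hu' | hu'
  · obtain ⟨s, hs, rfl⟩ : ∃ s, 0 ≤ s ∧ u = s + π / 2 := ⟨u - π / 2, by linarith, by ring⟩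
    rw [sin_add_pi_div_two, cos_add_pi_div_two]
    nlinarith [sin_le hs, cos_le_one s, pi_pos]
  · have := antitoneOn_add_cos_sub_pi_div_two_mul_sin ⟨hu, hu'.le⟩
      (right_mem_Icc.2 (by positivity)) hu'.le
    simp only [cos_pi_div_two, sin_pi_div_two] at this
    linarith

theorem integral_Ioi_pow_mul_exp_neg_mul (n : ℕ) {r : ℝ} (hr : 0 < r) :
    ∫ τ in Ioi 0, τ ^ n * exp (-r * τ) = Gamma (n + 1) / r ^ (n + 1) := by
  have h := integral_rpow_mul_exp_neg_mul_Ioi (a := n + 1) (by positivity) hr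
  have hpow : r ^ ((n : ℝ) + 1) = r ^ (n + 1) := by exact_mod_cast rpow_natCast r (n + 1)
  rw [add_sub_cancel_right, one_div, inv_rpow hr.le, hpow] at h
  rw [div_eq_inv_mul, ← h]
  refine setIntegral_congr_fun measurableSet_Ioi fun τ _ => ?_
  simp [rpow_natCast, neg_mul]

theorem integrableOn_Ioi_pow_mul_exp_neg_mul (n : ℕ) {r : ℝ} (hr : 0 < r) :
    IntegrableOn (fun τ : ℝ => τ ^ n * exp (-r * τ)) (Ioi 0) := by
  refine (integrableOn_rpow_mul_exp_neg_mul_rpow (s := n) (by linarith [n.cast_nonneg (α := ℝ)])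
    zero_lt_one hr).congr_fun (fun τ _ => ?_) measurableSet_Ioi
  simp [rpow_natCast]

noncomputable def gammaDensity (q : ℕ) (β τ : ℝ) : ℝ :=
  β ^ q / Gamma q * τ ^ (q - 1) * exp (-β * τ)

section GammaDensity

variable {q : ℕ} {β : ℝ}

theorem gammaDensity_nonneg (hβ : 0 ≤ β) {τ : ℝ} (hτ : 0 ≤ τ) : 0 ≤ gammaDensity q β τ := by
  unfold gammaDensity
  have := Gamma_nonneg_of_nonneg q.cast_nonneg
  positivity

theorem integrableOn_gammaDensity (hβ : 0 < β) : IntegrableOn (gammaDensity q β) (Ioi 0) := by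
  refine IntegrableOn.congr_fun ((integrableOn_Ioi_pow_mul_exp_neg_mul (q - 1) hβ).const_mul
    (β ^ q / Gamma q)) (fun τ _ => ?_) measurableSet_Ioi
  rw [gammaDensity, mul_assoc]

theorem integrableOn_mul_gammaDensity (hq : 1 ≤ q) (hβ : 0 < β) :
    IntegrableOn (fun τ => τ * gammaDensity q β τ) (Ioi 0) := by
  refine IntegrableOn.congr_fun ((integrableOn_Ioi_pow_mul_exp_neg_mul q hβ).const_mul
    (β ^ q / Gamma q)) (fun τ _ => ?_) measurableSet_Ioi
  rw [gammaDensity, ← pow_sub_one_mul (by omega : q ≠ 0) τ]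
  ring

theorem integral_gammaDensity (hq : 1 ≤ q) (hβ : 0 < β) :
    ∫ τ in Ioi 0, gammaDensity q β τ = 1 := by
  simp only [gammaDensity, mul_assoc, integral_const_mul]
  rw [integral_Ioi_pow_mul_exp_neg_mul _ hβ, Nat.sub_add_cancel hq, Nat.cast_sub hq, Nat.cast_one, sub_add_cancel]
  have := Gamma_pos_of_pos (Nat.cast_pos.2 hq)
  field_simp

theorem integral_mul_gammaDensity (hq : 1 ≤ q) (hβ : 0 < β) :
    ∫ τ in Ioi 0, τ * gammaDensity q β τ = q / β := by
  have h (τ : ℝ) : τ * gammaDensity q β τ = β ^ q / Gamma q * (τ ^ q * exp (-β * τ)) := by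
    rw [gammaDensity, ← pow_sub_one_mul (by omega : q ≠ 0) τ]
    ring
  have hq0 : (q : ℝ) ≠ 0 := Nat.cast_ne_zero.2 (by omega)
  simp only [h, integral_const_mul, integral_Ioi_pow_mul_exp_neg_mul _ hβ, Gamma_add_one hq0]
  have := Gamma_pos_of_pos (Nat.cast_pos.2 hq)
  field_simp
  ring

end GammaDensity

noncomputable def gammaMixture {ι : Type*} [Fintype ι] (q : ι → ℕ) (β p : ι → ℝ) (τ : ℝ) : ℝ :=
  ∑ i, p i * gammaDensity (q i) (β i) τ

section GammaMixture

variable {ι : Type*} [Fintype ι] {q : ι → ℕ} {β p : ι → ℝ}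

theorem gammaMixture_nonneg (hβ : ∀ i, 0 ≤ β i) (hp : ∀ i, 0 ≤ p i) {τ : ℝ} (hτ : 0 ≤ τ) :
    0 ≤ gammaMixture q β p τ :=
  Finset.sum_nonneg fun i _ => mul_nonneg (hp i) (gammaDensity_nonneg (hβ i) hτ)

theorem integrableOn_gammaMixture (hβ : ∀ i, 0 < β i) :
    IntegrableOn (gammaMixture q β p) (Ioi 0) :=
  integrable_finsetSum _ fun i _ => (integrableOn_gammaDensity (hβ i)).const_mul (p i)

theorem mul_gammaMixture (τ : ℝ) :
    τ * gammaMixture q β p τ = ∑ i, p i * (τ * gammaDensity (q i) (β i) τ) := by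
  simp only [gammaMixture, Finset.mul_sum, mul_left_comm τ]

theorem integrableOn_mul_gammaMixture (hq : ∀ i, 1 ≤ q i) (hβ : ∀ i, 0 < β i) :
    IntegrableOn (fun τ => τ * gammaMixture q β p τ) (Ioi 0) := by
  simp only [mul_gammaMixture]
  exact integrable_finsetSum _ fun i _ =>
    (integrableOn_mul_gammaDensity (hq i) (hβ i)).const_mul (p i)

theorem integral_gammaMixture (hq : ∀ i, 1 ≤ q i) (hβ : ∀ i, 0 < β i) :
    ∫ τ in Ioi 0, gammaMixture q β p τ = ∑ i, p i := by
  simp only [gammaMixture]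
  rw [integral_finsetSum _ fun i _ =>
    (integrableOn_gammaDensity (hβ i)).const_mul (p i)]
  simp only [integral_const_mul, integral_gammaDensity (hq _) (hβ _), mul_one]

theorem integral_mul_gammaMixture (hq : ∀ i, 1 ≤ q i) (hβ : ∀ i, 0 < β i) :
    ∫ τ in Ioi 0, τ * gammaMixture q β p τ = ∑ i, p i * q i / β i := by
  simp only [mul_gammaMixture]
  rw [integral_finsetSum _ fun i _ =>
    (integrableOn_mul_gammaDensity (hq i) (hβ i)).const_mul (p i)]
  simp only [integral_const_mul, integral_mul_gammaDensity (hq _) (hβ _), mul_div_assoc]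

end GammaMixture

theorem pi_div_two_mul_integral_sin_mul_le {g : ℝ → ℝ} (hg0 : ∀ τ ∈ Ioi 0, 0 ≤ g τ)
    (hg : IntegrableOn g (Ioi 0)) (hτg : IntegrableOn (fun τ => τ * g τ) (Ioi 0))
    {w : ℝ} (hw : 0 ≤ w) :
    π / 2 * ∫ τ in Ioi 0, sin (w * τ) * g τ ≤
      w * (∫ τ in Ioi 0, τ * g τ) + ∫ τ in Ioi 0, cos (w * τ) * g τ := by
  have hsin : IntegrableOn (fun τ => sin (w * τ) * g τ) (Ioi 0) :=
    hg.bdd_mul (c := 1) (by fun_prop) (ae_of_all _ fun τ => abs_sin_le_one _)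
  have hcos : IntegrableOn (fun τ => cos (w * τ) * g τ) (Ioi 0) :=
    hg.bdd_mul (c := 1) (by fun_prop) (ae_of_all _ fun τ => abs_cos_le_one _)
  rw [← integral_const_mul, ← integral_const_mul, ← integral_add (hτg.const_mul w) hcos]
  refine setIntegral_mono_on (hsin.const_mul _) ((hτg.const_mul w).add hcos) measurableSet_Ioi
    fun τ hτ => ?_
  have := mul_le_mul_of_nonneg_right (pi_div_two_mul_sin_le_add_cos (mul_nonneg hw (le_of_lt hτ)))
    (hg0 τ hτ)
  linarith

section LaplaceTransform

variable {f : ℝ → ℝ} {z : ℂ}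

theorem integrableOn_cexp_neg_mul_mul_ofReal (hf : IntegrableOn f (Ioi 0)) (hz : 0 ≤ z.re) :
    IntegrableOn (fun τ : ℝ => Complex.exp (-z * τ) * f τ) (Ioi 0) :=
  hf.ofReal.bdd_mul (c := 1) (by fun_prop) <| (ae_restrict_iff' measurableSet_Ioi).2 <|
    ae_of_all _ fun τ hτ => by simpa [Complex.norm_exp] using mul_nonneg hz (le_of_lt hτ)

theorem integral_cos_mul_exp_neg_mul_mul (hf : IntegrableOn f (Ioi 0)) (hz : 0 ≤ z.re) :
    ∫ τ in Ioi 0, cos (z.im * τ) * (exp (-(z.re * τ)) * f τ) =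
      (∫ τ in Ioi (0 : ℝ), Complex.exp (-z * τ) * f τ).re := by
  refine (integral_congr_ae (ae_of_all _ fun τ => ?_)).trans
    (integral_re (integrableOn_cexp_neg_mul_mul_ofReal hf hz))
  simp only [RCLike.re_to_complex, neg_mul, Complex.mul_re, Complex.exp_re, Complex.neg_re,
    Complex.ofReal_re, Complex.ofReal_im, mul_zero, sub_zero, Complex.neg_im, Complex.mul_im,
    zero_add, cos_neg]
  ring

theorem integral_sin_mul_exp_neg_mul_mul (hf : IntegrableOn f (Ioi 0)) (hz : 0 ≤ z.re) :
    ∫ τ in Ioi 0, sin (z.im * τ) * (exp (-(z.re * τ)) * f τ) =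
      -(∫ τ in Ioi (0 : ℝ), Complex.exp (-z * τ) * f τ).im := by
  refine (integral_congr_ae (ae_of_all _ fun τ => ?_)).trans
    ((integral_neg _).trans (congrArg Neg.neg
      (integral_im (integrableOn_cexp_neg_mul_mul_ofReal hf hz))))
  simp only [RCLike.im_to_complex, neg_mul, Complex.mul_im, Complex.ofReal_im, mul_zero,
    Complex.exp_im, Complex.neg_re, Complex.mul_re, Complex.ofReal_re, sub_zero, Complex.neg_im,
    zero_add, sin_neg]
  ring

end LaplaceTransform

theorem re_neg_of_add_mul_integral_cexp_neg_mul_eq_zero {f : ℝ → ℝ} {b : ℝ} {z : ℂ}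
    (hf0 : ∀ τ ∈ Ioi 0, 0 ≤ f τ) (hf : IntegrableOn f (Ioi 0))
    (hτf : IntegrableOn (fun τ => τ * f τ) (Ioi 0)) (hmass : ∫ τ in Ioi 0, f τ ≠ 0)
    (hb : 0 < b) (hbm : b * ∫ τ in Ioi 0, τ * f τ < π / 2)
    (hz : z + b * ∫ τ in Ioi (0 : ℝ), Complex.exp (-z * τ) * f τ = 0) : z.re < 0 := by
  by_contra! hx
  have hdecay : ∀ τ ∈ Ioi (0 : ℝ), exp (-(z.re * τ)) ≤ 1 := fun τ hτ =>
    exp_le_one_iff.2 (neg_nonpos.2 (mul_nonneg hx (le_of_lt hτ)))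
  have hdecay_ae : ∀ᵐ τ ∂volume.restrict (Ioi (0 : ℝ)), ‖exp (-(z.re * τ))‖ ≤ 1 :=
    (ae_restrict_iff' measurableSet_Ioi).2 <| ae_of_all _ fun τ hτ => by
      rw [norm_of_nonneg (exp_pos _).le]; exact hdecay τ hτ
  set g : ℝ → ℝ := fun τ => exp (-(z.re * τ)) * f τ
  have hg : IntegrableOn g (Ioi 0) := hf.bdd_mul (by fun_prop) hdecay_ae
  have hτg : IntegrableOn (fun τ => τ * g τ) (Ioi 0) :=
    IntegrableOn.congr_fun (hτf.bdd_mul (by fun_prop) hdecay_ae) (fun τ _ => by ring)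
      measurableSet_Ioi
  have hτg_le : ∫ τ in Ioi 0, τ * g τ ≤ ∫ τ in Ioi 0, τ * f τ :=
    setIntegral_mono_on hτg hτf measurableSet_Ioi fun τ hτ =>
      mul_le_mul_of_nonneg_left (mul_le_of_le_one_left (hf0 τ hτ) (hdecay τ hτ)) (le_of_lt hτ)
  have hL : ∫ τ in Ioi (0 : ℝ), Complex.exp (-z * τ) * f τ = -z / b := by
    rw [eq_div_iff (Complex.ofReal_ne_zero.2 hb.ne')]
    linear_combination hz
  have hcos : ∫ τ in Ioi 0, cos (z.im * τ) * g τ = -z.re / b := by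
    rw [integral_cos_mul_exp_neg_mul_mul hf hx, hL]
    simp
  have hsin : ∫ τ in Ioi 0, sin (z.im * τ) * g τ = z.im / b := by
    rw [integral_sin_mul_exp_neg_mul_mul hf hx, hL]
    simp [neg_div]
  have habs : ∫ τ in Ioi 0, cos (|z.im| * τ) * g τ = -z.re / b ∧
      ∫ τ in Ioi 0, sin (|z.im| * τ) * g τ = |z.im| / b := by
    rcases abs_choice z.im with h | h <;> rw [h]
    · exact ⟨hcos, hsin⟩
    · simp only [neg_mul, cos_neg, sin_neg, integral_neg, hcos, hsin, neg_div, and_self]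
  have key := pi_div_two_mul_integral_sin_mul_le
    (fun τ hτ => mul_nonneg (exp_pos _).le (hf0 τ hτ)) hg hτg (abs_nonneg z.im)
  rw [habs.1, habs.2] at key
  have hz0 : z = 0 := by
    have e1 : b * (π / 2 * (|z.im| / b)) = π / 2 * |z.im| := by field_simp
    have e2 : b * (|z.im| * (∫ τ in Ioi 0, τ * g τ) + -z.re / b) =
        b * |z.im| * (∫ τ in Ioi 0, τ * g τ) - z.re := by field_simp; ring
    have h1 := mul_le_mul_of_nonneg_left key hb.le
    have h2 := mul_le_mul_of_nonneg_left hτg_le (mul_nonneg hb.le (abs_nonneg z.im))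
    have hre : z.re = 0 := by nlinarith [abs_nonneg z.im]
    have him : |z.im| = 0 := by nlinarith [abs_nonneg z.im]
    exact Complex.ext hre (abs_eq_zero.1 him)
  simp only [hz0, neg_zero, zero_mul, Complex.exp_zero, one_mul, zero_add, mul_eq_zero,
    Complex.ofReal_eq_zero, hb.ne', false_or] at hz
  exact hmass (by exact_mod_cast hz)

/-- Paper Proposition 6.2 (neutral cooperativity): stability of the positive
steady state of the hematopoiesis model with a mixture of Gamma delay densities. -/
theorem stmt18 (α h k₀ : ℝ) (hα : 0 < α) (hh : 1 < h) (hk : α < k₀)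
    (q : Fin 3 → ℕ) (hq : ∀ i, 1 ≤ q i)
    (β : Fin 3 → ℝ) (hβ : ∀ i, 0 < β i)
    (p : Fin 3 → ℝ) (hp : ∀ i, 0 ≤ p i) (hpsum : ∑ i, p i = 1)
    (fp : ℝ → ℝ)
    (hfp : fp = fun τ => ∑ i, p i * (β i ^ q i / Real.Gamma (q i))
      * τ ^ (q i - 1) * Real.exp (-(β i) * τ))
    (Ep : ℝ) (hEp : Ep = ∑ i, p i * (q i : ℝ) / β i)
    (hstab : Ep < k₀ * Real.pi / (2 * α * h * (k₀ - α))) :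
    ∀ z : ℂ,
      z + ((α * h * (k₀ - α) / k₀ : ℝ) : ℂ) *
        (∫ τ in Set.Ioi (0 : ℝ), Complex.exp (-z * τ) * (fp τ : ℂ)) = 0 →
      z.re < 0 := by
  intro z hz
  have hk₀ : 0 < k₀ := hα.trans hk
  have hb : 0 < α * h * (k₀ - α) / k₀ :=
    div_pos (mul_pos (mul_pos hα (by linarith)) (by linarith)) hk₀
  have hbE : α * h * (k₀ - α) / k₀ * Ep < π / 2 := calc
    _ < α * h * (k₀ - α) / k₀ * (k₀ * π / (2 * α * h * (k₀ - α))) :=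
      mul_lt_mul_of_pos_left hstab hb
    _ = π / 2 := by
      have : h ≠ 0 := by linarith
      have : k₀ - α ≠ 0 := by linarith
      field_simp
  have hfp' : fp = gammaMixture q β p := by
    rw [hfp]
    funext τ
    exact Finset.sum_congr rfl fun i _ => by rw [gammaDensity]; ring
  subst hfp' hEp
  refine re_neg_of_add_mul_integral_cexp_neg_mul_eq_zero
    (fun τ hτ => gammaMixture_nonneg (fun i => (hβ i).le) hp (le_of_lt hτ))
    (integrableOn_gammaMixture hβ) (integrableOn_mul_gammaMixture hq hβ) ?_ hb ?_ hz
  · rw [integral_gammaMixture hq hβ, hpsum]; exact one_ne_zero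
  · rwa [integral_mul_gammaMixture hq hβ]
end
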